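/- arXiv:1402.0934 — 3 statements merged into one kernel-verified Lean document; each statement's English description precedes it below -/
import Mathlib

section
/- Let λ > 0 and m ≥ 0. Then the Stein factors for conditional Poisson approximation satisfy G_{m,1} ≤ min{ 1, √(2/(λ e)) } and G_{m,2} = P(P > m)/(λ P(P ≥ m)), where P ~ Poisson(λ). -/
open MeasureTheory Filter Set Topology Classical

/-- The Poisson(`lam`) probability mass function. -/
noncomputable def poiPMF (lam : ℝ) (i : ℕ) : ℝ := Real.exp (-lam) * lam ^ i / i.factorial

/-- `P(P ∈ A | P ≥ m)` for `P ~ Poisson(lam)`. -/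
noncomputable def poiCondProb (lam : ℝ) (m : ℕ) (A : Set ℕ) : ℝ :=
  (∑' k : ℕ, if k ∈ A ∧ m ≤ k then poiPMF lam k else 0) /
    (∑' k : ℕ, if m ≤ k then poiPMF lam k else 0)

/-- `g` is a solution on `ℤ_m` of the Stein equation for `Pn^{(m)}(λ)` with test function
`f = 1_A`: `λ g(i+1) − i g(i) 1{i>m} = 1_A(i) − P(P^{(m)} ∈ A)` for all `i ≥ m`. -/
def IsPoiSteinSol (lam : ℝ) (m : ℕ) (A : Set ℕ) (g : ℕ → ℝ) : Prop :=
  ∀ i : ℕ, m ≤ i →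
    lam * g (i + 1) - (if m < i then (i : ℝ) * g i else 0) =
      (if i ∈ A then 1 else 0) - poiCondProb lam m A

/-- The first Stein factor `G_{m,1} = sup_{f ∈ F_m} ‖g_{m,f}‖_m`, where
`‖h‖_m = sup_{w ≥ m} |h(w+1)|`. -/
noncomputable def poiG1 (lam : ℝ) (m : ℕ) : ℝ :=
  sSup {x : ℝ | ∃ A : Set ℕ, A ⊆ Set.Ici m ∧ ∃ g : ℕ → ℝ, IsPoiSteinSol lam m A g ∧
    ∃ w : ℕ, m ≤ w ∧ x = |g (w + 1)|}

/-- The second Stein factor `G_{m,2} = sup_{f ∈ F_m} ‖Δg_{m,f}‖_m`. -/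
noncomputable def poiG2 (lam : ℝ) (m : ℕ) : ℝ :=
  sSup {x : ℝ | ∃ A : Set ℕ, A ⊆ Set.Ici m ∧ ∃ g : ℕ → ℝ, IsPoiSteinSol lam m A g ∧
    ∃ w : ℕ, m ≤ w ∧ x = |g (w + 2) - g (w + 1)|}

/-!
Multiplying the Stein equation at `i` by `P(P = i)` and using `i P(P = i) = λ P(P = i - 1)` makes
it telescope: `λ P(P = w) g(w + 1) = ∑_{m ≤ k ≤ w} P(P = k) (1_A(k) - P(P⁽ᵐ⁾ ∈ A))`. With `C, R`
the masses of `[m, w]` and `(w, ∞)` and `a ≤ C`, `b ≤ R` those of `A` in them, the right side is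
`(aR - bC) / (C + R)`, of absolute value at most `CR / (C + R) ≤ F (1 - F)` for `F = P(P ≤ w)`.
Log-concavity of the Poisson weights and `E P = λ` give `F (1 - F) ≤ λ P(P = w)`. The sharper
`F (1 - F) ≤ √(2λ/e) P(P = w)` is proved by calculus in `λ`: it holds for small and for large `λ`,
and at an interior maximum of the difference the first- and second-order conditions force `w ≤ 1`
and `λ < 10/3`, where it is checked by hand.

For `Δg`, the same formula writes `(w + 1) λ P(P = w + 1) (C + R) Δg(w + 1)` as a function of
`(a, b)` that is nonincreasing in both variables, so comparing it at the corners of the admissible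
region bounds it by `(w + 1) P(P = w + 1) P(P > m)` in absolute value; `A = {m + 1}` attains the
bound at `w = m`.
-/

namespace PoissonStein

open Finset Filter Topology Real
open scoped Nat

section General

lemma abs_sub_div_mul_le {a b C R : ℝ} (ha : 0 ≤ a) (haC : a ≤ C) (hb : 0 ≤ b) (hbR : b ≤ R)
    (hCR : 0 < C + R) : |a - (a + b) / (C + R) * C| ≤ C * R / (C + R) := by
  have : a - (a + b) / (C + R) * C = (a * R - b * C) / (C + R) := by field_simp; ring
  rw [this, abs_div, abs_of_pos hCR]
  gcongr
  rw [abs_le]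
  constructor <;> nlinarith

lemma mul_div_add_le_mul_div_add {C F R : ℝ} (hCF : C ≤ F) (hCR : 0 < C + R) :
    C * R / (C + R) ≤ F * R / (F + R) := by
  rw [div_le_div_iff₀ hCR (by linarith)]
  nlinarith [mul_le_mul_of_nonneg_right hCF (sq_nonneg R)]

/-- As a function of `(a, b)` this expression is `α a + β b + const` with `α, β ≤ 0` by `hK₁` and
`hK₂`, so over the box allowed by the other hypotheses it is extremal at two opposite corners. -/
lemma abs_increment_le {lam i q pm a b C R f : ℝ} (ha : 0 ≤ a) (haC : a ≤ C) (hb : 0 ≤ b)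
    (hbR : b ≤ R) (hq : 0 ≤ q) (hi : 0 ≤ i) (hpm₀ : 0 ≤ pm) (hpm : pm ≤ C + R)
    (hK₁ : (i - lam) * R ≤ i * q) (hK₂ : (lam - i) * C ≤ i * q - i * pm)
    (hf : (f = 1 ∧ q ≤ b) ∨ (f = 0 ∧ b ≤ R - q)) :
    |(i - lam) * (a * R - b * C) + i * q * ((C + R) * f - (a + b))| ≤ i * q * (C + R - pm) := by
  obtain ⟨α, hα⟩ : ∃ α, α = (i - lam) * R - i * q := ⟨_, rfl⟩
  obtain ⟨β, hβ⟩ : ∃ β, β = (lam - i) * C - i * q := ⟨_, rfl⟩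
  have hE : (i - lam) * (a * R - b * C) + i * q * ((C + R) * f - (a + b)) =
      α * a + β * b + i * q * (C + R) * f := by rw [hα, hβ]; ring
  have hcorner : α * C + β * R = -(i * q * (C + R)) := by rw [hα, hβ]; ring
  have hα0 : α ≤ 0 := by linarith
  have hβpm : β ≤ -(i * pm) := by linarith
  have hβ0 : β ≤ 0 := hβpm.trans (neg_nonpos.2 (mul_nonneg hi hpm₀))
  have hT : 0 ≤ i * q * (C + R - pm) := mul_nonneg (mul_nonneg hi hq) (sub_nonneg.2 hpm)
  have haα : α * C ≤ α * a := mul_le_mul_of_nonpos_left haC hα0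
  rw [hE, abs_le]
  rcases hf with ⟨rfl, hqb⟩ | ⟨rfl, hbq⟩
  · constructor
    · nlinarith [mul_le_mul_of_nonpos_left hbR hβ0]
    · nlinarith [mul_nonpos_of_nonneg_of_nonpos ha hα0, mul_le_mul_of_nonpos_left hqb hβ0,
        mul_le_mul_of_nonneg_left hβpm hq]
  · constructor
    · nlinarith [mul_le_mul_of_nonpos_left hbq hβ0, mul_le_mul_of_nonneg_left hβpm hq]
    · nlinarith [mul_nonpos_of_nonneg_of_nonpos ha hα0, mul_nonpos_of_nonneg_of_nonpos hb hβ0]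

lemma IsLocalMax.le_zero_of_hasDerivAt_mul {f u G : ℝ → ℝ} {c g : ℝ} (hmax : IsLocalMax f c)
    (hf : ∀ᶠ x in 𝓝 c, HasDerivAt f (u x * G x) x) (hu : ∀ᶠ x in 𝓝 c, 0 < u x)
    (hG : HasDerivAt G g c) : g ≤ 0 := by
  have hGc : G c = 0 :=
    (mul_eq_zero.1 (hmax.hasDerivAt_eq_zero hf.self_of_nhds)).resolve_left hu.self_of_nhds.ne'
  by_contra! hg
  have hGpos : ∀ᶠ x in 𝓝[>] c, 0 < G x := by
    have := (hasDerivAt_iff_tendsto_slope.1 hG).eventually (eventually_gt_nhds hg)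
    filter_upwards [nhdsGT_le_nhdsNE c this, self_mem_nhdsWithin] with x hx hcx
    exact pos_of_slope_pos hcx hx hGc
  obtain ⟨d, hcd, hsub⟩ := mem_nhdsGT_iff_exists_Ioc_subset.1
    (hGpos.and (nhdsWithin_le_nhds (hf.and (hu.and hmax))))
  have hcont : ContinuousOn f (Set.Icc c d) := by
    intro x hx
    rcases hx.1.eq_or_lt with rfl | hcx
    · exact hf.self_of_nhds.continuousAt.continuousWithinAt
    · exact (hsub ⟨hcx, hx.2⟩).2.1.continuousAt.continuousWithinAt
  obtain ⟨ξ, hξ, hslope⟩ := exists_hasDerivAt_eq_slope f (fun x => u x * G x) hcd hcont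
    fun x hx => (hsub ⟨hx.1, hx.2.le⟩).2.1
  obtain ⟨hGξ, -, huξ, -⟩ := hsub ⟨hξ.1, hξ.2.le⟩
  have hfd : f d ≤ f c := (hsub ⟨hcd, le_rfl⟩).2.2.2
  have : 0 < (f d - f c) / (d - c) := hslope ▸ mul_pos huξ hGξ
  rw [div_pos_iff_of_pos_right (sub_pos.2 hcd)] at this
  linarith

lemma two_sub_mul_exp_le_two_add {t : ℝ} (ht : 0 ≤ t) : (2 - t) * exp t ≤ 2 + t := by
  have hderiv : ∀ u : ℝ, HasDerivAt (fun u => 2 + u - (2 - u) * exp u) (1 - (1 - u) * exp u) u :=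
    fun u => (((hasDerivAt_id u).const_add 2).sub (((hasDerivAt_id u).const_sub 2).mul
      (hasDerivAt_exp u))).congr_deriv (by simp; ring)
  have hmono : Monotone fun u => 2 + u - (2 - u) * exp u := by
    refine monotone_of_deriv_nonneg (fun u => (hderiv u).differentiableAt) fun u => ?_
    rw [(hderiv u).deriv, sub_nonneg]
    calc (1 - u) * exp u ≤ exp (-u) * exp u :=
          mul_le_mul_of_nonneg_right (by linarith [add_one_le_exp (-u)]) (exp_pos u).le
      _ = 1 := by rw [← exp_add, neg_add_cancel, exp_zero]
  have := hmono ht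
  simp only [add_zero, sub_zero, exp_zero, mul_one] at this
  linarith

lemma _root_.Nat.factorial_mul_factorial_add_le {k w : ℕ} (hkw : k ≤ w) (n : ℕ) :
    w ! * (n + k)! ≤ k ! * (n + w)! := by
  induction w, hkw using Nat.le_induction with
  | base => rfl
  | succ w _ ih =>
    calc (w + 1)! * (n + k)! = (w + 1) * (w ! * (n + k)!) := by
          rw [Nat.factorial_succ, mul_assoc]
      _ ≤ (n + w + 1) * (k ! * (n + w)!) := Nat.mul_le_mul (by omega) ih
      _ = k ! * (n + (w + 1))! := by rw [← add_assoc, Nat.factorial_succ]; ring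

end General

noncomputable def tailSum (f : ℕ → ℝ) (j : ℕ) : ℝ := ∑' n, f (n + j)

section Tail

variable {f g : ℕ → ℝ}

lemma tailSum_eq_add (hf : Summable f) (j : ℕ) :
    tailSum f j = f j + tailSum f (j + 1) := by
  rw [tailSum, ((summable_nat_add_iff j).2 hf).tsum_eq_zero_add, tailSum, zero_add]
  simp only [add_right_comm _ 1 j, add_assoc]

lemma sum_Ico_add_tailSum (hf : Summable f) {m j : ℕ} (hmj : m ≤ j) :
    ∑ k ∈ Ico m j, f k + tailSum f j = tailSum f m := by
  induction j, hmj using Nat.le_induction with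
  | base => simp
  | succ j hmj ih => rw [sum_Ico_succ_top hmj, ← ih, tailSum_eq_add hf j]; ring

lemma tailSum_zero (f : ℕ → ℝ) : tailSum f 0 = ∑' n, f n := by simp [tailSum]

lemma sum_range_add_tailSum (hf : Summable f) (j : ℕ) :
    ∑ k ∈ range j, f k + tailSum f j = ∑' n, f n :=
  hf.sum_add_tsum_nat_add j

lemma tsum_ite_le_eq_tailSum (hf : Summable f) (m : ℕ) :
    ∑' k, (if m ≤ k then f k else 0) = tailSum f m := by
  have hs : Summable fun k => if m ≤ k then f k else 0 :=
    (hf.indicator (Set.Ici m)).congr fun k => by simp [Set.indicator_apply]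
  rw [← hs.sum_add_tsum_nat_add m, sum_eq_zero fun k hk => if_neg (by simpa using hk), zero_add]
  exact tsum_congr fun n => if_pos (Nat.le_add_left m n)

lemma tailSum_nonneg (hf : 0 ≤ f) (j : ℕ) : 0 ≤ tailSum f j :=
  tsum_nonneg fun _ => hf _

lemma tailSum_le_tailSum (hf : Summable f) (hg : Summable g) (hfg : f ≤ g) (j : ℕ) :
    tailSum f j ≤ tailSum g j :=
  ((summable_nat_add_iff j).2 hf).tsum_le_tsum (fun _ => hfg _) ((summable_nat_add_iff j).2 hg)

end Tail

section PMF

variable {lam : ℝ}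

lemma poiPMF_nonneg (hl : 0 ≤ lam) (k : ℕ) : 0 ≤ poiPMF lam k := by
  unfold poiPMF; positivity

lemma poiPMF_pos (hl : 0 < lam) (k : ℕ) : 0 < poiPMF lam k := by
  unfold poiPMF; positivity

lemma hasSum_poiPMF (lam : ℝ) : HasSum (poiPMF lam) 1 := by
  have h := (NormedSpace.expSeries_div_hasSum_exp lam).mul_left (Real.exp (-lam))
  rw [← Real.exp_eq_exp_ℝ, ← Real.exp_add, neg_add_cancel, Real.exp_zero] at h
  exact h.congr_fun fun k => by rw [poiPMF, mul_div_assoc]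

lemma summable_poiPMF (lam : ℝ) : Summable (poiPMF lam) := (hasSum_poiPMF lam).summable

lemma tsum_poiPMF (lam : ℝ) : ∑' k, poiPMF lam k = 1 := (hasSum_poiPMF lam).tsum_eq

lemma succ_mul_poiPMF_succ (lam : ℝ) (k : ℕ) :
    ((k : ℝ) + 1) * poiPMF lam (k + 1) = lam * poiPMF lam k := by
  simp only [poiPMF, Nat.factorial_succ, pow_succ, Nat.cast_mul, Nat.cast_succ]
  field_simp

lemma summable_poiPMF_add (lam : ℝ) (j : ℕ) : Summable fun n => poiPMF lam (n + j) :=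
  (summable_nat_add_iff j).2 (summable_poiPMF lam)

lemma tailSum_poiPMF_zero (lam : ℝ) : tailSum (poiPMF lam) 0 = 1 := by
  rw [tailSum_zero, tsum_poiPMF]

lemma poiPMF_mul_poiPMF_add_le (hl : 0 ≤ lam) {k w : ℕ} (hkw : k ≤ w) (n : ℕ) :
    poiPMF lam k * poiPMF lam (n + w) ≤ poiPMF lam w * poiPMF lam (n + k) := by
  have key : ∀ a b : ℕ, poiPMF lam a * poiPMF lam (n + b) =
      Real.exp (-lam) ^ 2 * lam ^ (n + a + b) / ((a ! * (n + b)! : ℕ) : ℝ) := by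
    intro a b
    simp only [poiPMF, Nat.cast_mul, pow_add]
    ring
  rw [key k w, key w k, add_right_comm]
  apply div_le_div_of_nonneg_left (by positivity) (by positivity)
  exact_mod_cast Nat.factorial_mul_factorial_add_le hkw n

lemma poiPMF_mul_tailSum_le (hl : 0 ≤ lam) {k w : ℕ} (hkw : k ≤ w) :
    poiPMF lam k * tailSum (poiPMF lam) (w + 1) ≤ poiPMF lam w * tailSum (poiPMF lam) (k + 1) := by
  simp only [tailSum, ← tsum_mul_left]
  refine ((summable_poiPMF_add lam _).mul_left _).tsum_le_tsum (fun n => ?_)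
    ((summable_poiPMF_add lam _).mul_left _)
  simpa only [add_assoc, add_comm 1] using poiPMF_mul_poiPMF_add_le hl hkw (n + 1)

lemma mul_poiPMF_succ_le (hl : 0 ≤ lam) {c : ℝ} {j : ℕ} (hc : c ≤ j + 1) :
    c * poiPMF lam (j + 1) ≤ lam * poiPMF lam j := by
  rw [← succ_mul_poiPMF_succ]
  exact mul_le_mul_of_nonneg_right hc (poiPMF_nonneg hl _)

section Weighted

variable {c : ℕ → ℝ} {j : ℕ}

lemma summable_mul_poiPMF (hl : 0 ≤ lam) (hc0 : 0 ≤ c) (hc : ∀ n, c n ≤ n + j + 1) :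
    Summable fun n => c n * poiPMF lam (n + (j + 1)) :=
  ((summable_poiPMF_add lam j).mul_left lam).of_nonneg_of_le
    (fun n => mul_nonneg (hc0 n) (poiPMF_nonneg hl _))
    (fun n => mul_poiPMF_succ_le hl (by exact_mod_cast hc n))

lemma tsum_mul_poiPMF_le (hl : 0 ≤ lam) (hc0 : 0 ≤ c) (hc : ∀ n, c n ≤ n + j + 1) :
    ∑' n, c n * poiPMF lam (n + (j + 1)) ≤ lam * tailSum (poiPMF lam) j := by
  rw [tailSum, ← tsum_mul_left]
  exact (summable_mul_poiPMF hl hc0 hc).tsum_le_tsum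
    (fun n => mul_poiPMF_succ_le hl (by exact_mod_cast hc n))
    ((summable_poiPMF_add lam j).mul_left lam)

end Weighted

lemma succ_mul_tailSum_poiPMF_succ_le (hl : 0 ≤ lam) (j : ℕ) :
    ((j : ℝ) + 1) * tailSum (poiPMF lam) (j + 1) ≤ lam * tailSum (poiPMF lam) j := by
  rw [tailSum, ← tsum_mul_left]
  exact tsum_mul_poiPMF_le hl (fun _ => by positivity) fun n => by simp

/-- `E[(P - j)⁺]` for `P ~ Poisson(lam)`. -/
noncomputable def poiExcess (lam : ℝ) (j : ℕ) : ℝ :=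
  ∑' n : ℕ, ((n : ℝ) + 1) * poiPMF lam (n + (j + 1))

lemma poiExcess_nonneg (hl : 0 ≤ lam) (j : ℕ) : 0 ≤ poiExcess lam j :=
  tsum_nonneg fun n => mul_nonneg (by positivity) (poiPMF_nonneg hl _)

lemma poiExcess_le (hl : 0 ≤ lam) (j : ℕ) : poiExcess lam j ≤ lam * tailSum (poiPMF lam) j :=
  tsum_mul_poiPMF_le hl (fun _ => by positivity) fun _ => by
    linarith [(Nat.cast_nonneg j : (0 : ℝ) ≤ j)]

lemma poiExcess_eq_tailSum_add (hl : 0 ≤ lam) (j : ℕ) :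
    poiExcess lam j = tailSum (poiPMF lam) (j + 1) + poiExcess lam (j + 1) := by
  have hn : Summable fun n : ℕ => (n : ℝ) * poiPMF lam (n + (j + 1)) :=
    summable_mul_poiPMF hl (fun _ => by positivity) fun _ => by
      linarith [(Nat.cast_nonneg j : (0 : ℝ) ≤ j)]
  rw [poiExcess, tailSum]
  simp only [add_mul, one_mul]
  rw [hn.tsum_add (summable_poiPMF_add lam _), add_comm, hn.tsum_eq_zero_add, poiExcess]
  simp only [Nat.cast_zero, zero_mul, zero_add, Nat.cast_succ]
  congr 2 with n
  ring_nf

lemma sum_range_tailSum_le (hl : 0 ≤ lam) (N : ℕ) :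
    ∑ k ∈ range N, tailSum (poiPMF lam) (k + 1) ≤ lam := by
  have htel : ∀ N, ∑ k ∈ range N, tailSum (poiPMF lam) (k + 1) + poiExcess lam N =
      poiExcess lam 0 := by
    intro N
    induction N with
    | zero => simp
    | succ N ih => rw [sum_range_succ, ← ih, poiExcess_eq_tailSum_add hl N]; ring
  have := poiExcess_le hl 0
  rw [tailSum_poiPMF_zero, mul_one] at this
  linarith [htel N, poiExcess_nonneg hl N]

noncomputable def poiCDF (lam : ℝ) (w : ℕ) : ℝ := ∑ k ∈ range (w + 1), poiPMF lam k

lemma tailSum_poiPMF_succ (lam : ℝ) (w : ℕ) :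
    tailSum (poiPMF lam) (w + 1) = 1 - poiCDF lam w := by
  rw [poiCDF, ← tsum_poiPMF lam, ← sum_range_add_tailSum (summable_poiPMF lam) (w + 1)]
  ring

lemma poiCDF_mul_one_sub_le (hl : 0 ≤ lam) (w : ℕ) :
    poiCDF lam w * (1 - poiCDF lam w) ≤ lam * poiPMF lam w := by
  rw [← tailSum_poiPMF_succ, poiCDF, sum_mul]
  calc ∑ k ∈ range (w + 1), poiPMF lam k * tailSum (poiPMF lam) (w + 1)
      ≤ ∑ k ∈ range (w + 1), poiPMF lam w * tailSum (poiPMF lam) (k + 1) :=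
        sum_le_sum fun k hk => poiPMF_mul_tailSum_le hl (Nat.lt_succ_iff.1 (mem_range.1 hk))
    _ ≤ poiPMF lam w * lam := by
        rw [← mul_sum]
        exact mul_le_mul_of_nonneg_left (sum_range_tailSum_le hl _) (poiPMF_nonneg hl w)
    _ = lam * poiPMF lam w := mul_comm _ _

lemma sum_Ico_poiPMF_le_poiCDF (hl : 0 ≤ lam) (m w : ℕ) :
    ∑ k ∈ Ico m (w + 1), poiPMF lam k ≤ poiCDF lam w := by
  rw [poiCDF, range_eq_Ico]
  exact sum_le_sum_of_subset_of_nonneg (Ico_subset_Ico_left (Nat.zero_le m))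
    fun k _ _ => poiPMF_nonneg hl k

lemma tailSum_poiPMF_pos (hl : 0 < lam) (m : ℕ) : 0 < tailSum (poiPMF lam) m := by
  rw [tailSum_eq_add (summable_poiPMF lam)]
  linarith [poiPMF_pos hl m, tailSum_nonneg (poiPMF_nonneg hl.le) (m + 1)]

lemma sub_mul_tailSum_poiPMF_le (hl : 0 ≤ lam) (w : ℕ) :
    ((w : ℝ) + 1 - lam) * tailSum (poiPMF lam) (w + 1) ≤ (w + 1) * poiPMF lam (w + 1) := by
  have h := succ_mul_tailSum_poiPMF_succ_le hl w
  rw [tailSum_eq_add (summable_poiPMF lam) w] at h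
  linarith [succ_mul_poiPMF_succ lam w]

lemma sub_mul_sum_Ico_poiPMF_le (hl : 0 ≤ lam) {m w : ℕ} (hw : m ≤ w) :
    (lam - ((w : ℝ) + 1)) * ∑ k ∈ Ico m (w + 1), poiPMF lam k ≤
      (w + 1) * (poiPMF lam (w + 1) - poiPMF lam m) := by
  have hshift : ∑ k ∈ Ico m (w + 1), poiPMF lam (k + 1) =
      ∑ k ∈ Ico m (w + 1), poiPMF lam k + poiPMF lam (w + 1) - poiPMF lam m := by
    rw [sum_Ico_add', ← sum_Ico_succ_top (by omega),
      sum_eq_sum_Ico_succ_bot (by omega : m < w + 1 + 1)]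
    ring
  have hle : lam * ∑ k ∈ Ico m (w + 1), poiPMF lam k ≤
      (w + 1) * ∑ k ∈ Ico m (w + 1), poiPMF lam (k + 1) := by
    rw [mul_sum, mul_sum]
    refine sum_le_sum fun k hk => ?_
    rw [← succ_mul_poiPMF_succ]
    have : (k : ℝ) ≤ w := by exact_mod_cast Nat.lt_succ_iff.1 (mem_Ico.1 hk).2
    exact mul_le_mul_of_nonneg_right (by linarith) (poiPMF_nonneg hl _)
  rw [hshift] at hle
  linarith

end PMF

noncomputable def phi (t : ℝ) : ℝ := √(2 / exp 1) * √t

noncomputable def cdfGap (w : ℕ) (t : ℝ) : ℝ :=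
  poiCDF t w * (1 - poiCDF t w) - phi t * poiPMF t w

noncomputable def cdfGapSlope (w : ℕ) (t : ℝ) : ℝ :=
  2 * poiCDF t w - 1 - phi t * (2 * w + 1 - 2 * t) / (2 * t)

section Calculus

variable {t : ℝ}

lemma phi_nonneg (t : ℝ) : 0 ≤ phi t := by unfold phi; positivity

lemma phi_sq (ht : 0 ≤ t) : phi t ^ 2 = 2 * t / exp 1 := by
  rw [phi, mul_pow, Real.sq_sqrt (by positivity), Real.sq_sqrt ht]; ring

lemma hasDerivAt_phi (ht : 0 < t) : HasDerivAt phi (phi t / (2 * t)) t := by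
  refine ((Real.hasDerivAt_sqrt ht.ne').const_mul (√(2 / exp 1))).congr_deriv ?_
  rw [phi]
  field_simp
  rw [Real.sq_sqrt ht.le]

lemma phi_eq_mul_sqrt (ht : 0 < t) : phi t = t * √(2 / (t * exp 1)) := by
  rw [phi, ← Real.sqrt_mul (by positivity), ← Real.sqrt_sq ht.le, ← Real.sqrt_mul (sq_nonneg _),
    Real.sqrt_sq ht.le]
  congr 1
  field_simp

lemma hasDerivAt_poiPMF (k : ℕ) (ht : t ≠ 0) :
    HasDerivAt (fun s => poiPMF s k) (poiPMF t k * (k / t - 1)) t := by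
  have h := (((Real.hasDerivAt_exp (-t)).comp t (hasDerivAt_neg t)).mul
    (hasDerivAt_pow k t)).div_const (k ! : ℝ)
  refine h.congr_deriv ?_
  rcases k with _ | k
  · simp [poiPMF]
  · simp only [poiPMF, Function.comp_apply, Nat.add_sub_cancel, pow_succ]
    field_simp
    ring

lemma hasDerivAt_poiCDF (w : ℕ) (ht : t ≠ 0) :
    HasDerivAt (fun s => poiCDF s w) (-poiPMF t w) t := by
  induction w with
  | zero => simpa [poiCDF] using hasDerivAt_poiPMF 0 ht
  | succ w ih =>
    simp only [poiCDF, sum_range_succ _ (w + 1)]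
    refine (ih.add (hasDerivAt_poiPMF (w + 1) ht)).congr_deriv ?_
    have h := succ_mul_poiPMF_succ t w
    push_cast
    field_simp
    linear_combination h

lemma hasDerivAt_cdfGap (w : ℕ) (ht : 0 < t) :
    HasDerivAt (cdfGap w) (poiPMF t w * cdfGapSlope w t) t := by
  have hF := hasDerivAt_poiCDF w ht.ne'
  have h := (hF.mul ((hasDerivAt_const t 1).sub hF)).sub
    ((hasDerivAt_phi ht).mul (hasDerivAt_poiPMF w ht.ne'))
  refine h.congr_deriv ?_
  simp only [cdfGapSlope, Pi.sub_apply]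
  field_simp
  ring

lemma hasDerivAt_cdfGapSlope (w : ℕ) (ht : 0 < t) :
    HasDerivAt (cdfGapSlope w)
      (-2 * poiPMF t w + phi t * (2 * w + 1 + 2 * t) / (4 * t ^ 2)) t := by
  have hq : HasDerivAt (fun s : ℝ => (2 * w + 1 - 2 * s) / (2 * s))
      (((-2) * (2 * t) - (2 * w + 1 - 2 * t) * 2) / (2 * t) ^ 2) t :=
    (((hasDerivAt_id t).const_mul 2).const_sub _).div ((hasDerivAt_id t).const_mul 2)
      (by positivity) |>.congr_deriv (by simp)
  have h := (((hasDerivAt_poiCDF w ht.ne').const_mul 2).sub_const 1).sub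
    ((hasDerivAt_phi ht).mul hq)
  have hG : cdfGapSlope w =
      fun s => 2 * poiCDF s w - 1 - phi s * ((2 * w + 1 - 2 * s) / (2 * s)) :=
    funext fun s => by simp only [cdfGapSlope, mul_div_assoc]
  rw [hG]
  refine h.congr_deriv ?_
  field_simp
  ring

end Calculus

section Bounds

variable {t : ℝ}

lemma sum_range_sub_mul_poiPMF (t : ℝ) (w : ℕ) :
    ∑ k ∈ range (w + 1), (t - k) * poiPMF t k = t * poiPMF t w := by
  induction w with
  | zero => simp
  | succ w ih =>
    rw [sum_range_succ, ih]
    push_cast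
    linear_combination -succ_mul_poiPMF_succ t w

lemma sub_mul_poiCDF_le (ht : 0 ≤ t) (w : ℕ) : (t - w) * poiCDF t w ≤ t * poiPMF t w := by
  rw [← sum_range_sub_mul_poiPMF, poiCDF, mul_sum]
  refine sum_le_sum fun k hk => mul_le_mul_of_nonneg_right ?_ (poiPMF_nonneg ht k)
  have : (k : ℝ) ≤ w := by exact_mod_cast Nat.lt_succ_iff.1 (mem_range.1 hk)
  linarith

lemma poiCDF_nonneg (ht : 0 ≤ t) (w : ℕ) : 0 ≤ poiCDF t w :=
  sum_nonneg fun k _ => poiPMF_nonneg ht k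

lemma poiCDF_le_one (ht : 0 ≤ t) (w : ℕ) : poiCDF t w ≤ 1 := by
  linarith [tailSum_poiPMF_succ t w, tailSum_nonneg (poiPMF_nonneg ht) (w + 1)]

lemma cdfGap_nonpos_of_le_two_div_exp (ht : 0 ≤ t) (hte : t ≤ 2 / exp 1) (w : ℕ) :
    cdfGap w t ≤ 0 := by
  have hphi : t ≤ phi t := by
    calc t = √t * √t := (Real.mul_self_sqrt ht).symm
      _ ≤ √(2 / exp 1) * √t :=
        mul_le_mul_of_nonneg_right (Real.sqrt_le_sqrt hte) (Real.sqrt_nonneg t)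
  have := poiCDF_mul_one_sub_le ht w
  have := mul_le_mul_of_nonneg_right hphi (poiPMF_nonneg ht w)
  rw [cdfGap]
  linarith

lemma cdfGap_nonpos_of_ge (w : ℕ) (hw : 2 * w + 2 ≤ t) (he : 2 * exp 1 ≤ t) :
    cdfGap w t ≤ 0 := by
  have ht : 0 < t := lt_of_lt_of_le (by positivity) he
  have hF := poiCDF_nonneg ht.le w
  have hp := poiPMF_nonneg ht.le w
  have hF2p : poiCDF t w ≤ 2 * poiPMF t w := by
    have := sub_mul_poiCDF_le ht.le w
    nlinarith
  have hphi : 2 ≤ phi t := by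
    have hsq := phi_sq ht.le
    rw [div_eq_mul_inv] at hsq
    have : 4 ≤ phi t ^ 2 := by
      rw [hsq, le_mul_inv_iff₀ (exp_pos 1)]
      linarith
    nlinarith [phi_nonneg t]
  have := poiCDF_le_one ht.le w
  rw [cdfGap]
  nlinarith

lemma one_sub_exp_neg_le_phi (ht : 0 ≤ t) : 1 - exp (-t) ≤ phi t := by
  have hpade : (2 + t) * (1 - exp (-t)) ≤ 2 * t := by
    have h := mul_le_mul_of_nonneg_right (two_sub_mul_exp_le_two_add ht) (exp_pos (-t)).le
    rw [mul_assoc, ← exp_add, add_neg_cancel, exp_zero, mul_one] at h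
    linarith
  have hsq : (2 * t) ^ 2 ≤ ((2 + t) * phi t) ^ 2 := by
    rw [mul_pow (2 + t), phi_sq ht, mul_div_assoc', le_div_iff₀ (exp_pos 1)]
    have he : 0 ≤ 4 - (exp 1 - 2) ^ 2 := by nlinarith [exp_one_lt_d9, exp_one_gt_d9]
    nlinarith [mul_nonneg ht (sq_nonneg (t - (exp 1 - 2))), mul_nonneg ht he]
  have h2 : 2 * t ≤ (2 + t) * phi t :=
    (pow_le_pow_iff_left₀ (by positivity) (by have := phi_nonneg t; positivity) two_ne_zero).1 hsq
  nlinarith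

lemma cdfGap_zero_nonpos (ht : 0 ≤ t) : cdfGap 0 t ≤ 0 := by
  have h := one_sub_exp_neg_le_phi ht
  simp only [cdfGap, poiCDF, poiPMF, zero_add, sum_range_one, pow_zero, Nat.factorial_zero,
    Nat.cast_one, mul_one, div_one]
  nlinarith [exp_pos (-t)]

lemma cdfGap_one_nonpos (h1 : 139 / 50 ≤ t) (h2 : t ≤ 10 / 3) : cdfGap 1 t ≤ 0 := by
  have hE : 1 / 34 ≤ exp (-t) := by
    have h7 : exp (7 / 2) ^ 2 ≤ 34 ^ 2 := by
      have e7 : exp (7 / 2) ^ 2 = exp 1 ^ 7 := by rw [← exp_nat_mul, ← exp_nat_mul]; norm_num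
      have := pow_le_pow_left₀ (exp_pos 1).le exp_one_lt_d9.le 7
      linarith [show (2.7182818286 : ℝ) ^ 7 ≤ 34 ^ 2 by norm_num]
    have h34 : exp (7 / 2) ≤ 34 :=
      (pow_le_pow_iff_left₀ (exp_pos _).le (by norm_num) two_ne_zero).1 h7
    calc 1 / 34 ≤ 1 / exp (7 / 2) := one_div_le_one_div_of_le (exp_pos _) h34
      _ = exp (-(7 / 2)) := by rw [exp_neg, one_div]
      _ ≤ exp (-t) := exp_le_exp.2 (by linarith)
  have hphi : 39 / 10 ≤ phi t * t := by
    have hsq : (phi t * t) ^ 2 = 2 * t ^ 3 / exp 1 := by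
      rw [mul_pow, phi_sq (by linarith)]; ring
    have : (39 / 10) ^ 2 ≤ (phi t * t) ^ 2 := by
      rw [hsq, le_div_iff₀ (exp_pos 1)]
      nlinarith [exp_one_lt_d9, pow_le_pow_left₀ (by norm_num) h1 3]
    exact (pow_le_pow_iff_left₀ (by norm_num)
      (mul_nonneg (phi_nonneg t) (by linarith)) two_ne_zero).1 this
  have hL : (1 + t) * (1 - (1 + t) * exp (-t)) ≤ 38 / 10 := by
    nlinarith [mul_le_mul_of_nonneg_left hE (sq_nonneg (1 + t))]
  simp only [cdfGap, poiCDF, poiPMF, sum_range_succ, sum_range_zero, pow_zero, pow_one,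
    Nat.factorial_zero, Nat.factorial_one, Nat.cast_one, div_one, mul_one, zero_add]
  nlinarith [exp_pos (-t)]

end Bounds

section Critical

variable {w : ℕ} {c : ℝ}

lemma bounds_of_cdfGap_pos_of_slope_deriv_nonpos (hc : 0 < c)
    (hslope : -2 * poiPMF c w + phi c * (2 * w + 1 + 2 * c) / (4 * c ^ 2) ≤ 0)
    (hgap : 0 < cdfGap w c) : (w : ℝ) < c * (exp 1 / 2 - 1) ∧ c < 10 / 3 := by
  set F := poiCDF c w
  set p := poiPMF c w
  set r := phi c
  have hp : 0 < p := poiPMF_pos hc w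
  have hr : 0 ≤ r := phi_nonneg c
  have hrsq : r ^ 2 * exp 1 = 2 * c := by rw [phi_sq hc.le]; field_simp
  have hF := poiCDF_nonneg hc.le w
  have hfail : r * p < F * (1 - F) := by rw [cdfGap] at hgap; linarith
  have h1 : r * (2 * w + 1 + 2 * c) ≤ 8 * c ^ 2 * p := by
    have : r * (2 * w + 1 + 2 * c) / (4 * c ^ 2) ≤ 2 * p := by linarith
    rw [div_le_iff₀ (by positivity)] at this
    linarith
  have h2 : 2 * w + 1 + 2 * c ≤ 4 * c * exp 1 * (r * p) := by
    have := mul_le_mul_of_nonneg_left h1 (mul_nonneg hr (exp_pos 1).le)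
    nlinarith
  have hw : (w : ℝ) < c * (exp 1 / 2 - 1) := by
    have : 4 * c * exp 1 * (r * p) < c * exp 1 := by
      have : F * (1 - F) ≤ 1 / 4 := by nlinarith [sq_nonneg (F - 1 / 2)]
      nlinarith [mul_pos hc (exp_pos 1)]
    linarith
  have he := exp_one_lt_d9
  have hFp : (2 - exp 1 / 2) * F ≤ p := by
    have hgeo := sub_mul_poiCDF_le hc.le w
    have : c * (2 - exp 1 / 2) * F ≤ (c - w) * F := mul_le_mul_of_nonneg_right (by linarith) hF
    nlinarith
  have hr1 : (2 - exp 1 / 2) * r < 1 := by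
    have : (2 - exp 1 / 2) * (r * p) < (2 - exp 1 / 2) * F :=
      mul_lt_mul_of_pos_left (by nlinarith) (by linarith)
    nlinarith
  refine ⟨hw, ?_⟩
  have : ((2 - exp 1 / 2) * r) ^ 2 < 1 := by
    nlinarith [mul_nonneg (show (0 : ℝ) ≤ 2 - exp 1 / 2 by linarith) hr]
  nlinarith [exp_one_gt_d9]

lemma cdfGap_nonpos_of_slope_deriv_nonpos (hc : 0 < c)
    (hslope : -2 * poiPMF c w + phi c * (2 * w + 1 + 2 * c) / (4 * c ^ 2) ≤ 0) :
    cdfGap w c ≤ 0 := by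
  by_contra! hgap
  obtain ⟨hw, hc3⟩ := bounds_of_cdfGap_pos_of_slope_deriv_nonpos hc hslope hgap
  have he := exp_one_lt_d9
  have hw1 : w ≤ 1 := by
    have : (w : ℝ) < 2 := by nlinarith
    exact_mod_cast Nat.lt_succ_iff.1 (by exact_mod_cast this)
  interval_cases w
  · exact hgap.not_ge (cdfGap_zero_nonpos hc.le)
  · have : 139 / 50 ≤ c := by
      simp only [Nat.cast_one] at hw
      nlinarith [exp_one_gt_d9]
    exact hgap.not_ge (cdfGap_one_nonpos this hc3.le)

end Critical

theorem poiCDF_mul_one_sub_le_phi_mul (w : ℕ) {t : ℝ} (ht : 0 < t) :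
    poiCDF t w * (1 - poiCDF t w) ≤ phi t * poiPMF t w := by
  rw [← sub_nonpos]
  change cdfGap w t ≤ 0
  by_contra! hpos
  set a := 2 / exp 1
  set T := max (2 * (w : ℝ) + 2) (2 * exp 1)
  have ha : 0 < a := by positivity
  have hbig : ∀ s, T ≤ s → cdfGap w s ≤ 0 := fun s hs =>
    cdfGap_nonpos_of_ge w ((le_max_left _ _).trans hs) ((le_max_right _ _).trans hs)
  have hat : a < t := by
    by_contra! h
    exact hpos.not_ge (cdfGap_nonpos_of_le_two_div_exp ht.le h w)
  have htT : t < T := by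
    by_contra! h
    exact hpos.not_ge (hbig t h)
  have hcont : Continuous (cdfGap w) := by
    unfold cdfGap poiCDF poiPMF phi
    fun_prop
  obtain ⟨c, hcmem, hcmax⟩ := isCompact_Icc.exists_isMaxOn ⟨t, hat.le, htT.le⟩ hcont.continuousOn
  have hc : 0 < cdfGap w c := hpos.trans_le (hcmax ⟨hat.le, htT.le⟩)
  have hac : a < c := hcmem.1.lt_of_ne fun h =>
    hc.not_ge (h ▸ cdfGap_nonpos_of_le_two_div_exp ha.le le_rfl w)
  have hcT : c < T := hcmem.2.lt_of_ne fun h => hc.not_ge (h ▸ hbig T le_rfl)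
  have hc0 : 0 < c := ha.trans hac
  have hslope := IsLocalMax.le_zero_of_hasDerivAt_mul (hcmax.isLocalMax (Icc_mem_nhds hac hcT))
    ((eventually_gt_nhds hc0).mono fun s hs => hasDerivAt_cdfGap w hs)
    ((eventually_gt_nhds hc0).mono fun s hs => poiPMF_pos hs w)
    (hasDerivAt_cdfGapSlope w hc0)
  exact hc.not_ge (cdfGap_nonpos_of_slope_deriv_nonpos hc0 hslope)

lemma poiCondProb_eq (lam : ℝ) (m : ℕ) (A : Set ℕ) :
    poiCondProb lam m A =
      tailSum (A.indicator (poiPMF lam)) m / tailSum (poiPMF lam) m := by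
  have hA : ∀ k, (if k ∈ A ∧ m ≤ k then poiPMF lam k else 0) =
      if m ≤ k then A.indicator (poiPMF lam) k else 0 := fun k => by
    by_cases hk : k ∈ A <;> simp [hk]
  rw [poiCondProb, tsum_congr hA, tsum_ite_le_eq_tailSum ((summable_poiPMF lam).indicator A),
    tsum_ite_le_eq_tailSum (summable_poiPMF lam)]

section Stein

variable {lam : ℝ} {m : ℕ} {A : Set ℕ} {g : ℕ → ℝ}

lemma IsPoiSteinSol.mul_poiPMF_eq (hg : IsPoiSteinSol lam m A g) {w : ℕ} (hw : m ≤ w) :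
    lam * poiPMF lam w * g (w + 1) =
      ∑ k ∈ Ico m (w + 1), (A.indicator (poiPMF lam) k - poiCondProb lam m A * poiPMF lam k) := by
  induction w, hw using Nat.le_induction with
  | base =>
    have h := hg m le_rfl
    rw [if_neg (lt_irrefl m)] at h
    rw [Nat.Ico_succ_singleton, sum_singleton, Set.indicator_apply]
    split_ifs at h ⊢ <;> linear_combination poiPMF lam m * h
  | succ w hmw ih =>
    have h := hg (w + 1) (by omega)
    rw [if_pos (by omega)] at h
    rw [sum_Ico_succ_top (by omega), ← ih, Set.indicator_apply]
    have hrec := succ_mul_poiPMF_succ lam w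
    push_cast at h ⊢
    split_ifs at h ⊢ <;> linear_combination poiPMF lam (w + 1) * h + g (w + 1) * hrec

lemma IsPoiSteinSol.mul_abs_le (hl : 0 < lam) (hg : IsPoiSteinSol lam m A g) {w : ℕ}
    (hw : m ≤ w) :
    lam * poiPMF lam w * |g (w + 1)| ≤ poiCDF lam w * (1 - poiCDF lam w) := by
  set p := poiPMF lam
  set C := ∑ k ∈ Ico m (w + 1), p k
  set R := tailSum p (w + 1)
  have hS : C + R = tailSum p m := sum_Ico_add_tailSum (summable_poiPMF lam) (by omega)
  have hν := sum_Ico_add_tailSum ((summable_poiPMF lam).indicator A) (by omega : m ≤ w + 1)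
  have hpA : ∀ k, 0 ≤ A.indicator p k := Set.indicator_nonneg fun k _ => poiPMF_nonneg hl.le k
  have hpA' : A.indicator p ≤ p := Set.indicator_le_self' fun k _ => poiPMF_nonneg hl.le k
  have hCR : 0 < C + R := hS ▸ tailSum_poiPMF_pos hl m
  have hsol : lam * p w * g (w + 1) = ∑ k ∈ Ico m (w + 1), A.indicator p k -
      (∑ k ∈ Ico m (w + 1), A.indicator p k + tailSum (A.indicator p) (w + 1)) / (C + R) * C := by
    rw [IsPoiSteinSol.mul_poiPMF_eq hg hw, sum_sub_distrib, ← mul_sum, poiCondProb_eq, hν, hS]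
  calc lam * p w * |g (w + 1)| = |lam * p w * g (w + 1)| := by
        rw [abs_mul, abs_of_pos (mul_pos hl (poiPMF_pos hl w))]
    _ ≤ C * R / (C + R) := hsol ▸ abs_sub_div_mul_le (sum_nonneg fun k _ => hpA k)
        (sum_le_sum fun k _ => hpA' k) (tailSum_nonneg hpA _)
        (tailSum_le_tailSum ((summable_poiPMF lam).indicator A) (summable_poiPMF lam) hpA' _) hCR
    _ ≤ poiCDF lam w * R / (poiCDF lam w + R) :=
        mul_div_add_le_mul_div_add (sum_Ico_poiPMF_le_poiCDF hl.le m w) hCR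
    _ = poiCDF lam w * (1 - poiCDF lam w) := by
        rw [show R = 1 - poiCDF lam w from tailSum_poiPMF_succ lam w, add_sub_cancel, div_one]

lemma IsPoiSteinSol.abs_le (hl : 0 < lam) (hg : IsPoiSteinSol lam m A g) {w : ℕ} (hw : m ≤ w) :
    |g (w + 1)| ≤ min 1 √(2 / (lam * exp 1)) := by
  have hpos : 0 < lam * poiPMF lam w := mul_pos hl (poiPMF_pos hl w)
  refine le_of_mul_le_mul_left ?_ hpos
  rw [mul_min_of_nonneg _ _ hpos.le, mul_one]
  refine le_min ((IsPoiSteinSol.mul_abs_le hl hg hw).trans (poiCDF_mul_one_sub_le hl.le w))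
    ((IsPoiSteinSol.mul_abs_le hl hg hw).trans ?_)
  have := poiCDF_mul_one_sub_le_phi_mul w hl
  rw [phi_eq_mul_sqrt hl] at this
  linarith

end Stein

section StepBound

variable {lam : ℝ} {m : ℕ} {A : Set ℕ} {g : ℕ → ℝ}

lemma IsPoiSteinSol.increment_eq (hg : IsPoiSteinSol lam m A g) {w : ℕ} (hw : m ≤ w) :
    (w + 1) * lam * poiPMF lam (w + 1) * (g (w + 2) - g (w + 1)) =
      ((w : ℝ) + 1 - lam) *
          ∑ k ∈ Ico m (w + 1), (A.indicator (poiPMF lam) k - poiCondProb lam m A * poiPMF lam k) +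
        (w + 1) * poiPMF lam (w + 1) * ((if w + 1 ∈ A then 1 else 0) - poiCondProb lam m A) := by
  have h₁ := IsPoiSteinSol.mul_poiPMF_eq hg hw
  have h₂ := IsPoiSteinSol.mul_poiPMF_eq hg (hw.trans (Nat.le_succ w))
  rw [sum_Ico_succ_top (by omega), ← h₁, Set.indicator_apply] at h₂
  have hrec := succ_mul_poiPMF_succ lam w
  split_ifs at h₂ ⊢ <;>
    linear_combination (↑w + 1) * h₂ + (↑w + 1 - lam) * h₁ - lam * g (w + 1) * hrec

lemma IsPoiSteinSol.abs_sub_le (hl : 0 < lam) (hg : IsPoiSteinSol lam m A g) {w : ℕ}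
    (hw : m ≤ w) :
    |g (w + 2) - g (w + 1)| ≤ tailSum (poiPMF lam) (m + 1) / (lam * tailSum (poiPMF lam) m) := by
  set p := poiPMF lam
  set C := ∑ k ∈ Ico m (w + 1), p k
  set R := tailSum p (w + 1)
  set a := ∑ k ∈ Ico m (w + 1), A.indicator p k
  set b := tailSum (A.indicator p) (w + 1)
  set f : ℝ := if w + 1 ∈ A then 1 else 0
  have hsum := (summable_poiPMF lam).indicator A
  have hS : C + R = tailSum p m := sum_Ico_add_tailSum (summable_poiPMF lam) (by omega)
  have hν : a + b = tailSum (A.indicator p) m := sum_Ico_add_tailSum hsum (by omega)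
  have hpA : ∀ k, 0 ≤ A.indicator p k := Set.indicator_nonneg fun k _ => poiPMF_nonneg hl.le k
  have hpA' : A.indicator p ≤ p := Set.indicator_le_self' fun k _ => poiPMF_nonneg hl.le k
  have hCR : 0 < C + R := hS ▸ tailSum_poiPMF_pos hl m
  have hT : tailSum p (m + 1) = C + R - p m := by
    rw [hS, tailSum_eq_add (summable_poiPMF lam) m]; ring
  have hf : (f = 1 ∧ p (w + 1) ≤ b) ∨ (f = 0 ∧ b ≤ R - p (w + 1)) := by
    have hb := tailSum_eq_add hsum (w + 1)
    have hR := tailSum_eq_add (summable_poiPMF lam) (w + 1)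
    have hbR := tailSum_le_tailSum hsum (summable_poiPMF lam) hpA' (w + 1 + 1)
    by_cases hA : w + 1 ∈ A
    · rw [Set.indicator_of_mem hA] at hb
      exact Or.inl ⟨if_pos hA, by linarith [tailSum_nonneg hpA (w + 1 + 1)]⟩
    · rw [Set.indicator_of_notMem hA, zero_add] at hb
      exact Or.inr ⟨if_neg hA, by linarith⟩
  have hkey : (w + 1) * p (w + 1) * (lam * (C + R)) * (g (w + 2) - g (w + 1)) =
      ((w : ℝ) + 1 - lam) * (a * R - b * C) + (w + 1) * p (w + 1) * ((C + R) * f - (a + b)) := by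
    have h := IsPoiSteinSol.increment_eq hg hw
    have hμ : poiCondProb lam m A * (C + R) = a + b := by
      rw [poiCondProb_eq, hS, hν, div_mul_cancel₀ _ (tailSum_poiPMF_pos hl m).ne']
    rw [sum_sub_distrib, ← mul_sum] at h
    linear_combination (C + R) * h - (((w : ℝ) + 1 - lam) * C + (w + 1) * p (w + 1)) * hμ
  have hbox := abs_increment_le (lam := lam) (q := p (w + 1)) (sum_nonneg fun k _ => hpA k)
    (sum_le_sum fun k _ => hpA' k) (tailSum_nonneg hpA _)
    (tailSum_le_tailSum hsum (summable_poiPMF lam) hpA' _) (poiPMF_nonneg hl.le (w + 1))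
    (by positivity) (poiPMF_nonneg hl.le m)
    (by linarith [tailSum_nonneg (poiPMF_nonneg hl.le) (m + 1)])
    (sub_mul_tailSum_poiPMF_le hl.le w) ((sub_mul_sum_Ico_poiPMF_le hl.le hw).trans_eq (by ring)) hf
  have hK : 0 < (w + 1) * p (w + 1) := mul_pos (by positivity) (poiPMF_pos hl _)
  rw [← hkey, abs_mul, abs_of_pos (by positivity), ← hT] at hbox
  rw [← hS, le_div_iff₀ (by positivity)]
  refine le_of_mul_le_mul_left ?_ hK
  linarith

end StepBound

section Extremal

variable {lam : ℝ} {m : ℕ} {g : ℕ → ℝ}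

noncomputable def steinSol (lam : ℝ) (m : ℕ) (A : Set ℕ) : ℕ → ℝ
  | 0 => 0
  | i + 1 => ((if m < i then (i : ℝ) * steinSol lam m A i else 0) + (if i ∈ A then 1 else 0) -
      poiCondProb lam m A) / lam

lemma isPoiSteinSol_steinSol (hl : lam ≠ 0) (m : ℕ) (A : Set ℕ) :
    IsPoiSteinSol lam m A (steinSol lam m A) := fun i _ => by
  rw [steinSol]
  field_simp
  ring

lemma tailSum_indicator_singleton_succ (lam : ℝ) (m : ℕ) :
    tailSum (({m + 1} : Set ℕ).indicator (poiPMF lam)) m = poiPMF lam (m + 1) := by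
  rw [tailSum, tsum_eq_single 1 fun n hn => Set.indicator_of_notMem (by simp; omega) _]
  rw [add_comm, Set.indicator_of_mem (Set.mem_singleton _)]

lemma IsPoiSteinSol.sub_eq_of_singleton (hl : 0 < lam) (hg : IsPoiSteinSol lam m {m + 1} g) :
    g (m + 2) - g (m + 1) = tailSum (poiPMF lam) (m + 1) / (lam * tailSum (poiPMF lam) m) := by
  have h := IsPoiSteinSol.increment_eq hg le_rfl
  have hS := tailSum_eq_add (summable_poiPMF lam) m
  have hSpos := tailSum_poiPMF_pos hl m
  have hq := poiPMF_pos hl (m + 1)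
  have hrec := succ_mul_poiPMF_succ lam m
  rw [Nat.Ico_succ_singleton, sum_singleton, Set.indicator_of_notMem (by simp),
    if_pos (Set.mem_singleton _), poiCondProb_eq, tailSum_indicator_singleton_succ] at h
  rw [eq_div_iff (by positivity)]
  apply mul_left_cancel₀ (show ((m : ℝ) + 1) * poiPMF lam (m + 1) ≠ 0 by positivity)
  field_simp at h
  linear_combination h + (m + 1) * poiPMF lam (m + 1) * hS - poiPMF lam (m + 1) * hrec

end Extremal

theorem poiG1_le {lam : ℝ} (hl : 0 < lam) (m : ℕ) :
    poiG1 lam m ≤ min 1 √(2 / (lam * exp 1)) :=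
  Real.sSup_le (by rintro _ ⟨A, -, g, hg, w, hw, rfl⟩; exact IsPoiSteinSol.abs_le hl hg hw)
    (le_min zero_le_one (Real.sqrt_nonneg _))

theorem poiG2_eq {lam : ℝ} (hl : 0 < lam) (m : ℕ) :
    poiG2 lam m = tailSum (poiPMF lam) (m + 1) / (lam * tailSum (poiPMF lam) m) := by
  refine IsGreatest.csSup_eq ⟨⟨{m + 1}, by simp, _, isPoiSteinSol_steinSol hl.ne' m {m + 1}, m,
    le_rfl, ?_⟩, ?_⟩
  · rw [IsPoiSteinSol.sub_eq_of_singleton hl (isPoiSteinSol_steinSol hl.ne' m _), abs_of_nonneg]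
    exact div_nonneg (tailSum_nonneg (poiPMF_nonneg hl.le) _)
      (mul_nonneg hl.le (tailSum_nonneg (poiPMF_nonneg hl.le) _))
  · rintro _ ⟨A, -, g, hg, w, hw, rfl⟩
    exact IsPoiSteinSol.abs_sub_le hl hg hw

end PoissonStein

open PoissonStein in
/-- For `λ > 0` and `m ≥ 0`, the Stein factors for conditional Poisson
approximation satisfy `G_{m,1} ≤ min{1, √(2/(λe))}` and
`G_{m,2} = P(P > m)/(λ P(P ≥ m))` for `P ~ Poisson(λ)`. -/
theorem stmt15 (lam : ℝ) (hlam : 0 < lam) (m : ℕ) :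
    poiG1 lam m ≤ min 1 (Real.sqrt (2 / (lam * Real.exp 1))) ∧
    poiG2 lam m =
      (∑' k : ℕ, if m < k then poiPMF lam k else 0) /
        (lam * ∑' k : ℕ, if m ≤ k then poiPMF lam k else 0) := by
  refine ⟨poiG1_le hlam m, ?_⟩
  simp_rw [Nat.lt_iff_add_one_le]
  rw [poiG2_eq hlam, tsum_ite_le_eq_tailSum (summable_poiPMF lam),
    tsum_ite_le_eq_tailSum (summable_poiPMF lam)]
end

section
/- Let X_1, …, X_n be independent real random variables, s a threshold with p_i = P(X_i > s) ∈ [0,1) and λ = Σ_{i=1}^n p_i > 0, and let N = Σ_{i=1}^n 1{X_i > s}. Then d_TV( L(N^{(1)}), Pn^{(1)}(λ) ) ≤ [ (1 − e^{−λ} − λ e^{−λ}) / ( λ (1 − e^{−λ}) ) ] · Σ_{i=1}^n p_i² / ( 1 − Π_{i=1}^n (1 − p_i) ). -/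
/-!
Stein–Chen method for the zero-truncated Poisson law. For `A ⊆ {1, 2, …}` put
`u_A(j) = 1_A(j) - Pn^{(1)}(λ)(A) · 1_{j ≥ 1}` and let `g_A` solve `λ g(k+1) - k g(k) = u_A(k)`
with `g(0) = 0`. Then `P(N ∈ A) - Pn^{(1)}(λ)(A) P(N ≥ 1) = E[λ g_A(N+1) - N g_A(N)]`, and for
a sum of independent indicators with means `p_i` the right side equals
`Σ p_i² E[g_A(N_i + 2) - g_A(N_i + 1)]`, where `N_i` is `N` without the `i`-th indicator and hence
independent of it. It remains to bound `|g_A(k+1) - g_A(k)|` for `k ≥ 1`. This increment is a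
combination of the Poisson masses of `A` below, at and above `k` in which only the mass at `k` has
a positive coefficient, because the ratios `π_{j+1}/π_j = λ/(j+1)` decrease; that gives the upper
bound, and the lower one follows since replacing `A` by its complement in `{1, 2, …}` turns `g_A`
into `-g_A`. Finally `P(N ≥ 1) = 1 - Π(1 - p_i)` by independence.
-/

open MeasureTheory ProbabilityTheory Filter Set Topology Classical

noncomputable def condP {Ω : Type*} [MeasurableSpace Ω] (μ : Measure Ω) (A B : Set Ω) : ℝ :=
  (μ (A ∩ B)).toReal / (μ B).toReal

open Finset

section Poisson

variable {lam : ℝ}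

lemma poiPMF_zero (lam : ℝ) : poiPMF lam 0 = Real.exp (-lam) := by simp [poiPMF]

lemma poiPMF_one (lam : ℝ) : poiPMF lam 1 = lam * Real.exp (-lam) := by simp [poiPMF, mul_comm]

lemma poiPMF_succ (lam : ℝ) (k : ℕ) : poiPMF lam (k + 1) = lam / (k + 1) * poiPMF lam k := by
  simp only [poiPMF, Nat.factorial_succ, Nat.cast_mul, pow_succ]
  push_cast
  field_simp

lemma poiPMF_pos (hlam : 0 < lam) (k : ℕ) : 0 < poiPMF lam k := by
  unfold poiPMF; positivity

lemma poiPMF_nonneg (hlam : 0 ≤ lam) (k : ℕ) : 0 ≤ poiPMF lam k := by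
  unfold poiPMF; positivity

lemma hasSum_poiPMF (lam : ℝ) : HasSum (poiPMF lam) 1 := by
  unfold poiPMF
  have h := (NormedSpace.expSeries_div_hasSum_exp lam).mul_left (Real.exp (-lam))
  rw [← Real.exp_eq_exp_ℝ, ← Real.exp_add, neg_add_cancel, Real.exp_zero] at h
  simpa only [poiPMF, mul_div_assoc] using h

lemma summable_poiPMF (lam : ℝ) : Summable (poiPMF lam) := (hasSum_poiPMF lam).summable

lemma mul_poiPMF_le_poiPMF_succ (hlam : 0 ≤ lam) {k n : ℕ} (hkn : k ≤ n) :
    lam / (n + 1) * poiPMF lam k ≤ poiPMF lam (k + 1) := by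
  rw [poiPMF_succ]
  gcongr
  exact poiPMF_nonneg hlam k

lemma poiPMF_succ_le_mul (hlam : 0 ≤ lam) {k n : ℕ} (hnk : n ≤ k) :
    poiPMF lam (k + 1) ≤ lam / (n + 1) * poiPMF lam k := by
  rw [poiPMF_succ]
  gcongr
  exact poiPMF_nonneg hlam k

lemma one_sub_exp_neg_pos (hlam : 0 < lam) : 0 < 1 - Real.exp (-lam) :=
  sub_pos.2 (Real.exp_lt_one_iff.2 (neg_lt_zero.2 hlam))

lemma summable_poiPMF_nat_add (lam : ℝ) (k : ℕ) : Summable (fun j => poiPMF lam (j + k)) :=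
  (summable_nat_add_iff k).2 (summable_poiPMF lam)

lemma one_sub_exp_neg_eq_sum_add_tsum (lam : ℝ) (l : ℕ) :
    1 - Real.exp (-lam)
      = ∑ i ∈ range (l + 1), poiPMF lam (i + 1) + ∑' j, poiPMF lam (j + (l + 2)) := by
  rw [← (hasSum_poiPMF lam).tsum_eq, ← (summable_poiPMF lam).sum_add_tsum_nat_add (l + 2),
    sum_range_succ' _ (l + 1), poiPMF_zero]
  ring

lemma div_mul_sum_poiPMF_add_le (hlam : 0 ≤ lam) (l : ℕ) :
    lam / (l + 1) * ∑ i ∈ range l, poiPMF lam (i + 1) + poiPMF lam 1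
      ≤ ∑ i ∈ range (l + 1), poiPMF lam (i + 1) := by
  rw [sum_range_succ', mul_sum]
  gcongr with i hi
  exact mul_poiPMF_le_poiPMF_succ hlam (by simpa using hi)

lemma tsum_poiPMF_nat_add_le (hlam : 0 ≤ lam) (l : ℕ) :
    ∑' j, poiPMF lam (j + (l + 2)) ≤ lam / (l + 1) * ∑' j, poiPMF lam (j + (l + 1)) := by
  rw [← tsum_mul_left]
  refine (summable_poiPMF_nat_add lam _).tsum_le_tsum (fun j => ?_)
    ((summable_poiPMF_nat_add lam _).mul_left _)
  exact poiPMF_succ_le_mul hlam (by omega : l ≤ j + (l + 1))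

end Poisson

noncomputable def poissonSteinSol (lam : ℝ) (u : ℕ → ℝ) : ℕ → ℝ
  | 0 => 0
  | k + 1 => (∑ i ∈ range (k + 1), u i * poiPMF lam i) / (lam * poiPMF lam k)

section SteinSol

variable {lam : ℝ}

lemma poissonSteinSol_stein (hlam : 0 < lam) (u : ℕ → ℝ) (k : ℕ) :
    lam * poissonSteinSol lam u (k + 1) - k * poissonSteinSol lam u k = u k := by
  have hπ := poiPMF_pos hlam
  cases k with
  | zero =>
    have := hπ 0
    simp only [poissonSteinSol, zero_add, sum_range_one, Nat.cast_zero, zero_mul, sub_zero]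
    field_simp
  | succ k =>
    have := hπ k
    simp only [poissonSteinSol, sum_range_succ _ (k + 1), poiPMF_succ lam k]
    push_cast
    field_simp
    ring

lemma poissonSteinSol_neg (lam : ℝ) (u : ℕ → ℝ) :
    poissonSteinSol lam (-u) = -poissonSteinSol lam u := by
  ext k
  cases k <;> simp [poissonSteinSol, neg_div]

end SteinSol

-- `Pn^{(1)}(λ)(A)` for `A ⊆ {1, 2, …}`
noncomputable def truncPoissonProb (lam : ℝ) (A : Set ℕ) : ℝ :=
  (∑' k, A.indicator (poiPMF lam) k) / (1 - Real.exp (-lam))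

noncomputable def truncPoissonSteinRHS (lam : ℝ) (A : Set ℕ) (j : ℕ) : ℝ :=
  A.indicator 1 j - truncPoissonProb lam A * (Set.Ici 1).indicator 1 j

noncomputable abbrev truncPoissonSteinSol (lam : ℝ) (A : Set ℕ) : ℕ → ℝ :=
  poissonSteinSol lam (truncPoissonSteinRHS lam A)

section TruncPoisson

variable {lam : ℝ} {A : Set ℕ}

lemma tsum_indicator_Ici_one_poiPMF (lam : ℝ) :
    ∑' k, (Set.Ici 1).indicator (poiPMF lam) k = 1 - Real.exp (-lam) := by
  have h := (summable_poiPMF lam).tsum_eq_zero_add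
  rw [(hasSum_poiPMF lam).tsum_eq, poiPMF_zero] at h
  rw [((summable_poiPMF lam).indicator _).tsum_eq_zero_add]
  simp only [Set.mem_Ici, le_add_iff_nonneg_left, zero_le, Set.indicator_of_mem,
    Set.indicator_of_notMem (by simp : (0 : ℕ) ∉ Set.Ici 1)]
  linarith

lemma truncPoissonProb_add_compl (hlam : 0 < lam) (hA : A ⊆ Set.Ici 1) :
    truncPoissonProb lam A + truncPoissonProb lam (Set.Ici 1 \ A) = 1 := by
  have hs := (summable_poiPMF lam).indicator
  rw [truncPoissonProb, truncPoissonProb, ← add_div, Set.indicator_sdiff hA]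
  simp only [Pi.sub_apply]
  rw [(hs _).tsum_sub (hs _), add_sub_cancel, tsum_indicator_Ici_one_poiPMF,
    div_self (one_sub_exp_neg_pos hlam).ne']

lemma truncPoissonSteinRHS_compl (hlam : 0 < lam) (hA : A ⊆ Set.Ici 1) :
    truncPoissonSteinRHS lam (Set.Ici 1 \ A) = -truncPoissonSteinRHS lam A := by
  ext j
  have hm := truncPoissonProb_add_compl hlam hA
  simp only [truncPoissonSteinRHS, Set.indicator_sdiff hA, Pi.neg_apply, Pi.sub_apply]
  linear_combination (-(Set.Ici 1 : Set ℕ).indicator 1 j : ℝ) * hm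

lemma truncPoissonSteinSol_compl (hlam : 0 < lam) (hA : A ⊆ Set.Ici 1) :
    truncPoissonSteinSol lam (Set.Ici 1 \ A) = -truncPoissonSteinSol lam A := by
  rw [truncPoissonSteinSol, truncPoissonSteinRHS_compl hlam hA, poissonSteinSol_neg]

lemma truncPoissonSteinSol_succ (lam : ℝ) (A : Set ℕ) (k : ℕ) :
    truncPoissonSteinSol lam A (k + 1)
      = (∑ i ∈ range (k + 1), A.indicator (poiPMF lam) i
          - truncPoissonProb lam A * ∑ i ∈ range k, poiPMF lam (i + 1))
        / (lam * poiPMF lam k) := by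
  have hterm : ∀ i, truncPoissonSteinRHS lam A i * poiPMF lam i = A.indicator (poiPMF lam) i
      - truncPoissonProb lam A * (Set.Ici 1).indicator (poiPMF lam) i := by
    intro i
    simp only [truncPoissonSteinRHS, Set.indicator_apply, Pi.one_apply]
    split_ifs <;> ring
  simp only [truncPoissonSteinSol, poissonSteinSol, hterm, sum_sub_distrib, ← mul_sum,
    sum_range_succ' _ k]
  simp only [Set.mem_Ici, le_add_iff_nonneg_left, zero_le, Set.indicator_of_mem,
    Set.indicator_of_notMem (by simp : (0 : ℕ) ∉ Set.Ici 1)]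
  ring

lemma mul_truncPoissonSteinSol_sub (hlam : 0 < lam) (A : Set ℕ) (l : ℕ) :
    (1 - Real.exp (-lam)) * (lam * poiPMF lam (l + 1))
        * (truncPoissonSteinSol lam A (l + 2) - truncPoissonSteinSol lam A (l + 1))
      = (∑ i ∈ range (l + 1), A.indicator (poiPMF lam) i)
          * (∑' j, poiPMF lam (j + (l + 2)) - lam / (l + 1) * ∑' j, poiPMF lam (j + (l + 1)))
        + A.indicator (poiPMF lam) (l + 1)
          * (∑' j, poiPMF lam (j + (l + 2)) + lam / (l + 1) * ∑ i ∈ range l, poiPMF lam (i + 1))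
        - (∑' j, A.indicator (poiPMF lam) (j + (l + 2)))
          * (∑ i ∈ range (l + 1), poiPMF lam (i + 1)
              - lam / (l + 1) * ∑ i ∈ range l, poiPMF lam (i + 1)) := by
  have hπ := poiPMF_pos hlam
  have hq := one_sub_exp_neg_pos hlam
  have hsucc := poiPMF_succ lam l
  have htot := one_sub_exp_neg_eq_sum_add_tsum lam l
  have hmass : truncPoissonProb lam A * (1 - Real.exp (-lam))
      = ∑ i ∈ range (l + 1), A.indicator (poiPMF lam) i + A.indicator (poiPMF lam) (l + 1)
        + ∑' j, A.indicator (poiPMF lam) (j + (l + 2)) := by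
    rw [truncPoissonProb, div_mul_cancel₀ _ hq.ne',
      ← ((summable_poiPMF lam).indicator A).sum_add_tsum_nat_add (l + 2), sum_range_succ]
  have htail : ∑' j, poiPMF lam (j + (l + 1))
      = poiPMF lam (l + 1) + ∑' j, poiPMF lam (j + (l + 2)) := by
    rw [(summable_poiPMF_nat_add lam (l + 1)).tsum_eq_zero_add, zero_add]
    congr 2 with j
    ring_nf
  have hsum : ∑ i ∈ range (l + 1), poiPMF lam (i + 1)
      = ∑ i ∈ range l, poiPMF lam (i + 1) + poiPMF lam (l + 1) := sum_range_succ _ l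
  have hg2 := truncPoissonSteinSol_succ lam A (l + 1)
  have hg1 := truncPoissonSteinSol_succ lam A l
  rw [sum_range_succ _ (l + 1)] at hg2
  rw [htail]
  set r := lam / (l + 1)
  set m := truncPoissonProb lam A
  set q := 1 - Real.exp (-lam)
  set Plo := ∑ i ∈ range (l + 1), A.indicator (poiPMF lam) i
  set T1 := ∑ i ∈ range (l + 1), poiPMF lam (i + 1)
  set Tlo := ∑ i ∈ range l, poiPMF lam (i + 1)
  have h2 : lam * poiPMF lam (l + 1) * truncPoissonSteinSol lam A (l + 2)
      = Plo + A.indicator (poiPMF lam) (l + 1) - m * T1 := by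
    rw [hg2, mul_div_cancel₀ _ (mul_pos hlam (hπ _)).ne']
  have h1 : lam * poiPMF lam (l + 1) * truncPoissonSteinSol lam A (l + 1)
      = r * (Plo - m * Tlo) := by
    have := hπ l
    rw [hg1, hsucc]
    field_simp
  calc q * (lam * poiPMF lam (l + 1))
        * (truncPoissonSteinSol lam A (l + 2) - truncPoissonSteinSol lam A (l + 1))
      = q * (lam * poiPMF lam (l + 1) * truncPoissonSteinSol lam A (l + 2)
          - lam * poiPMF lam (l + 1) * truncPoissonSteinSol lam A (l + 1)) := by ring
    _ = _ := by
      rw [h2, h1]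
      linear_combination (r * Tlo - T1) * hmass
        + (Plo + A.indicator (poiPMF lam) (l + 1) - r * Plo) * htot - r * Plo * hsum

theorem truncPoissonSteinSol_sub_le (hlam : 0 < lam) (A : Set ℕ) (l : ℕ) :
    truncPoissonSteinSol lam A (l + 2) - truncPoissonSteinSol lam A (l + 1)
      ≤ (1 - Real.exp (-lam) - lam * Real.exp (-lam)) / (lam * (1 - Real.exp (-lam))) := by
  have hπ := poiPMF_pos hlam
  have hq := one_sub_exp_neg_pos hlam
  have hdecomp := mul_truncPoissonSteinSol_sub hlam A l
  have hbelow := tsum_poiPMF_nat_add_le hlam.le l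
  have habove := div_mul_sum_poiPMF_add_le hlam.le l
  have htot := one_sub_exp_neg_eq_sum_add_tsum lam l
  have hind : ∀ k, 0 ≤ A.indicator (poiPMF lam) k := Set.indicator_nonneg fun k _ => (hπ k).le
  have hPlo : 0 ≤ ∑ i ∈ range (l + 1), A.indicator (poiPMF lam) i := sum_nonneg fun i _ => hind i
  have hPhi : 0 ≤ ∑' j, A.indicator (poiPMF lam) (j + (l + 2)) := tsum_nonneg fun j => hind _
  have hPmid : A.indicator (poiPMF lam) (l + 1) ≤ poiPMF lam (l + 1) :=
    Set.indicator_le_self' (fun k _ => (hπ k).le) _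
  have hlow :
      0 ≤ ∑' j, poiPMF lam (j + (l + 2)) + lam / (l + 1) * ∑ i ∈ range l, poiPMF lam (i + 1) :=
    add_nonneg (tsum_nonneg fun j => (hπ _).le)
      (mul_nonneg (by positivity) (sum_nonneg fun i _ => (hπ _).le))
  set Δ := truncPoissonSteinSol lam A (l + 2) - truncPoissonSteinSol lam A (l + 1)
  set q := 1 - Real.exp (-lam)
  set r := lam / (l + 1)
  set T1 := ∑ i ∈ range (l + 1), poiPMF lam (i + 1)
  set Tlo := ∑ i ∈ range l, poiPMF lam (i + 1)
  set Thi := ∑' j, poiPMF lam (j + (l + 2))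
  have hkey : q * (lam * poiPMF lam (l + 1)) * Δ ≤ poiPMF lam (l + 1) * (q - poiPMF lam 1) := by
    rw [hdecomp]
    nlinarith [mul_nonneg hPlo (sub_nonneg.2 hbelow),
      mul_nonneg hPhi (by linarith [hπ 1] : 0 ≤ T1 - r * Tlo),
      mul_le_mul hPmid (by linarith : Thi + r * Tlo ≤ q - poiPMF lam 1) hlow (hπ _).le,
      hind (l + 1)]
  rw [← poiPMF_one, le_div_iff₀ (mul_pos hlam hq)]
  nlinarith [hπ (l + 1)]

theorem abs_truncPoissonSteinSol_sub_le (hlam : 0 < lam) (hA : A ⊆ Set.Ici 1) (l : ℕ) :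
    |truncPoissonSteinSol lam A (l + 2) - truncPoissonSteinSol lam A (l + 1)|
      ≤ (1 - Real.exp (-lam) - lam * Real.exp (-lam)) / (lam * (1 - Real.exp (-lam))) := by
  have hcompl := truncPoissonSteinSol_sub_le hlam (Set.Ici 1 \ A) l
  rw [truncPoissonSteinSol_compl hlam hA] at hcompl
  simp only [Pi.neg_apply] at hcompl
  exact abs_sub_le_iff.2 ⟨truncPoissonSteinSol_sub_le hlam A l, by linarith⟩

lemma integral_truncPoissonSteinRHS_comp {Ω : Type*} [MeasurableSpace Ω] {μ : Measure Ω}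
    [IsFiniteMeasure μ] (lam : ℝ) (A : Set ℕ) {W : Ω → ℕ} (hW : Measurable W) :
    ∫ ω, truncPoissonSteinRHS lam A (W ω) ∂μ
      = μ.real {ω | W ω ∈ A} - truncPoissonProb lam A * μ.real {ω | 1 ≤ W ω} := by
  have hset : ∀ B : Set ℕ, MeasurableSet (W ⁻¹' B) := fun B => hW (MeasurableSet.of_discrete)
  simp only [truncPoissonSteinRHS, ← Set.indicator_comp_right, Pi.one_comp]
  rw [integral_sub ((integrable_const 1).indicator (hset _))
      (((integrable_const 1).indicator (hset _)).const_mul _), integral_const_mul,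
    integral_indicator_one (hset _), integral_indicator_one (hset _)]
  rfl

end TruncPoisson

lemma integrable_comp_of_le {Ω : Type*} [MeasurableSpace Ω] {μ : Measure Ω} [IsFiniteMeasure μ]
    {W : Ω → ℕ} (hW : Measurable W) {n : ℕ} (hWn : ∀ ω, W ω ≤ n) (f : ℕ → ℝ) :
    Integrable (fun ω => f (W ω)) μ :=
  Integrable.of_bound (measurable_from_top.comp hW).aestronglyMeasurable
    (∑ k ∈ range (n + 1), |f k|) (ae_of_all _ fun ω =>
      single_le_sum (f := fun k => |f k|) (fun _ _ => abs_nonneg _)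
        (mem_range.2 (Nat.lt_succ_of_le (hWn ω))))

lemma prod_one_sub_lt_one {ι : Type*} [Fintype ι] {p : ι → ℝ} (h0 : ∀ i, 0 ≤ p i)
    (h1 : ∀ i, p i ≤ 1) (hpos : 0 < ∑ i, p i) : ∏ i, (1 - p i) < 1 := by
  classical
  obtain ⟨i, -, hi⟩ := exists_lt_of_sum_lt (f := fun _ => (0 : ℝ)) (by simpa using hpos)
  have hrest : ∏ j ∈ univ.erase i, (1 - p j) ≤ 1 :=
    prod_le_one (fun j _ => sub_nonneg.2 (h1 j)) fun j _ => by linarith [h0 j]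
  rw [← mul_prod_erase _ _ (mem_univ i)]
  nlinarith [h1 i]

section BernoulliSum

variable {ι Ω : Type*} [MeasurableSpace Ω] {μ : Measure Ω} {Y : ι → Ω → ℕ}

lemma integrable_comp_sum [IsFiniteMeasure μ] (hY : ∀ i, Measurable (Y i))
    (hY1 : ∀ i ω, Y i ω ≤ 1) (s : Finset ι) (f : ℕ → ℝ) :
    Integrable (fun ω => f (∑ i ∈ s, Y i ω)) μ :=
  integrable_comp_of_le (n := #s) (Finset.measurable_sum s fun i _ => hY i)
    (fun ω => (sum_le_sum fun i _ => hY1 i ω).trans_eq (by simp)) f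

lemma integrable_mul_comp_sum [IsFiniteMeasure μ] (hY : ∀ i, Measurable (Y i))
    (hY1 : ∀ i ω, Y i ω ≤ 1) (i : ι) (s : Finset ι) (f : ℕ → ℝ) :
    Integrable (fun ω => (Y i ω : ℝ) * f (∑ j ∈ s, Y j ω)) μ :=
  (integrable_comp_sum hY hY1 s f).bdd_mul (measurable_from_top.comp (hY i)).aestronglyMeasurable
    (c := 1) (ae_of_all _ fun ω => by simpa using hY1 i ω)

lemma integral_mul_comp_sum_erase [Fintype ι] [DecidableEq ι] (hY : ∀ i, Measurable (Y i))
    (hindep : iIndepFun Y μ) (i : ι) (f : ℕ → ℝ) :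
    ∫ ω, (Y i ω : ℝ) * f (∑ j ∈ univ.erase i, Y j ω) ∂μ
      = (∫ ω, (Y i ω : ℝ) ∂μ) * ∫ ω, f (∑ j ∈ univ.erase i, Y j ω) ∂μ := by
  have h := hindep.indepFun_finsetSum_of_notMem hY (notMem_erase i univ)
  rw [Finset.sum_fn] at h
  exact (h.symm.comp measurable_from_top measurable_from_top).integral_fun_mul_eq_mul_integral
    (measurable_from_top.comp (hY i)).aestronglyMeasurable
    (measurable_from_top.comp (Finset.measurable_sum _ fun j _ => hY j)).aestronglyMeasurable

theorem integral_bernoulliSum_stein [Fintype ι] [DecidableEq ι] (hY : ∀ i, Measurable (Y i))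
    (hindep : iIndepFun Y μ) (hY1 : ∀ i ω, Y i ω ≤ 1) (f : ℕ → ℝ) :
    ∫ ω, ((∑ i, ∫ ω', (Y i ω' : ℝ) ∂μ) * f (∑ i, Y i ω + 1)
        - ((∑ i, Y i ω : ℕ) : ℝ) * f (∑ i, Y i ω)) ∂μ
      = ∑ i, (∫ ω, (Y i ω : ℝ) ∂μ) ^ 2
          * ∫ ω, (f (∑ j ∈ univ.erase i, Y j ω + 2) - f (∑ j ∈ univ.erase i, Y j ω + 1)) ∂μ := by
  have := hindep.isProbabilityMeasure
  have hsplit : ∀ i ω, ∑ j, Y j ω = ∑ j ∈ univ.erase i, Y j ω + Y i ω := fun i ω =>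
    (sum_erase_add _ _ (mem_univ i)).symm
  have hY01 : ∀ i ω, Y i ω = 0 ∨ Y i ω = 1 := fun i ω =>
    Nat.le_one_iff_eq_zero_or_eq_one.1 (hY1 i ω)
  have hsizeBias : ∫ ω, ((∑ i, Y i ω : ℕ) : ℝ) * f (∑ i, Y i ω) ∂μ
      = ∑ i, (∫ ω, (Y i ω : ℝ) ∂μ) * ∫ ω, f (∑ j ∈ univ.erase i, Y j ω + 1) ∂μ := by
    have h : ∀ ω, ((∑ i, Y i ω : ℕ) : ℝ) * f (∑ i, Y i ω)
        = ∑ i, (Y i ω : ℝ) * f (∑ j ∈ univ.erase i, Y j ω + 1) := fun ω => by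
      push_cast
      rw [sum_mul]
      refine sum_congr rfl fun i _ => ?_
      rcases hY01 i ω with h | h <;> simp [hsplit i ω, h]
    simp_rw [h]
    rw [integral_finsetSum _ fun i _ => integrable_mul_comp_sum hY hY1 i _ (fun k => f (k + 1))]
    exact sum_congr rfl fun i _ => integral_mul_comp_sum_erase hY hindep i (fun k => f (k + 1))
  have hshift : ∀ i, ∫ ω, f (∑ j, Y j ω + 1) ∂μ = ∫ ω, f (∑ j ∈ univ.erase i, Y j ω + 1) ∂μ
      + (∫ ω, (Y i ω : ℝ) ∂μ)
        * ∫ ω, (f (∑ j ∈ univ.erase i, Y j ω + 2) - f (∑ j ∈ univ.erase i, Y j ω + 1)) ∂μ := by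
    intro i
    have h : ∀ ω, f (∑ j, Y j ω + 1) = f (∑ j ∈ univ.erase i, Y j ω + 1)
        + (Y i ω : ℝ) * (f (∑ j ∈ univ.erase i, Y j ω + 2) - f (∑ j ∈ univ.erase i, Y j ω + 1)) :=
      fun ω => by rcases hY01 i ω with h | h <;> simp [hsplit i ω, h]
    simp_rw [h]
    rw [integral_add (integrable_comp_sum hY hY1 _ (fun k => f (k + 1)))
      (integrable_mul_comp_sum hY hY1 i _ fun k => f (k + 2) - f (k + 1)),
      integral_mul_comp_sum_erase hY hindep i fun k => f (k + 2) - f (k + 1)]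
  rw [integral_sub ((integrable_comp_sum hY hY1 _ (fun k => f (k + 1))).const_mul _)
      (integrable_comp_sum hY hY1 _ fun k => k * f k),
    integral_const_mul, hsizeBias, sum_mul, ← sum_sub_distrib]
  refine sum_congr rfl fun i _ => ?_
  rw [hshift i]
  ring

lemma measureReal_one_le_sum [Fintype ι] (hY : ∀ i, Measurable (Y i)) (hindep : iIndepFun Y μ)
    (hY1 : ∀ i ω, Y i ω ≤ 1) :
    μ.real {ω | 1 ≤ ∑ i, Y i ω} = 1 - ∏ i, (1 - ∫ ω, (Y i ω : ℝ) ∂μ) := by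
  have := hindep.isProbabilityMeasure
  have hset : MeasurableSet {ω | 1 ≤ ∑ i, Y i ω} :=
    Finset.measurable_sum _ (fun i _ => hY i) MeasurableSet.of_discrete
  have hprod : ∀ ω, ∏ i, (1 - (Y i ω : ℝ)) = 1 - {ω | 1 ≤ ∑ i, Y i ω}.indicator 1 ω := by
    intro ω
    by_cases h : ∃ i, Y i ω = 1
    · obtain ⟨i, hi⟩ := h
      have hN : ω ∈ {ω | 1 ≤ ∑ i, Y i ω} :=
        hi ▸ single_le_sum (f := (Y · ω)) (fun j _ => Nat.zero_le _) (mem_univ i)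
      rw [prod_eq_zero (mem_univ i) (by simp [hi]), Set.indicator_of_mem hN]
      simp
    · simp only [not_exists] at h
      have h0 : ∀ i, Y i ω = 0 := fun i => by have := hY1 i ω; have := h i; omega
      simp [h0]
  have h := hindep.integral_fun_prod_comp (f := fun _ (y : ℕ) => 1 - (y : ℝ))
    (fun i => (hY i).aemeasurable) (fun i => measurable_from_top.aestronglyMeasurable)
  simp only [hprod] at h
  rw [integral_sub (integrable_const 1) ((integrable_const 1).indicator hset), integral_const,
    integral_indicator_one hset] at h
  have hmean : ∀ i, ∫ ω, (1 - (Y i ω : ℝ)) ∂μ = 1 - ∫ ω, (Y i ω : ℝ) ∂μ := fun i => by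
    rw [integral_sub (integrable_const 1) (integrable_comp_of_le (hY i) (hY1 i) Nat.cast),
      integral_const, probReal_univ, one_smul]
  simp only [hmean, probReal_univ, smul_eq_mul, mul_one] at h
  linarith

theorem abs_integral_bernoulliSum_stein_le [Fintype ι] [DecidableEq ι] (hY : ∀ i, Measurable (Y i))
    (hindep : iIndepFun Y μ) (hY1 : ∀ i ω, Y i ω ≤ 1) {f : ℕ → ℝ} {C : ℝ}
    (hf : ∀ k, |f (k + 2) - f (k + 1)| ≤ C) :
    |∫ ω, ((∑ i, ∫ ω', (Y i ω' : ℝ) ∂μ) * f (∑ i, Y i ω + 1)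
        - ((∑ i, Y i ω : ℕ) : ℝ) * f (∑ i, Y i ω)) ∂μ|
      ≤ C * ∑ i, (∫ ω, (Y i ω : ℝ) ∂μ) ^ 2 := by
  have := hindep.isProbabilityMeasure
  rw [integral_bernoulliSum_stein hY hindep hY1, mul_sum]
  refine (abs_sum_le_sum_abs _ _).trans (sum_le_sum fun i _ => ?_)
  rw [abs_mul, abs_of_nonneg (sq_nonneg _), mul_comm C]
  gcongr
  simpa using norm_integral_le_of_norm_le_const (μ := μ)
    (ae_of_all μ fun ω => (Real.norm_eq_abs _).trans_le (hf (∑ j ∈ univ.erase i, Y j ω)))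

theorem abs_condP_bernoulliSum_sub_truncPoissonProb_le [Fintype ι] [DecidableEq ι]
    (hY : ∀ i, Measurable (Y i)) (hindep : iIndepFun Y μ) (hY1 : ∀ i ω, Y i ω ≤ 1)
    {p : ι → ℝ} (hp : ∀ i, ∫ ω, (Y i ω : ℝ) ∂μ = p i) {lam : ℝ} (hlam : lam = ∑ i, p i)
    (hlampos : 0 < lam) {A : Set ℕ} (hA : A ⊆ Set.Ici 1) :
    |condP μ {ω | ∑ i, Y i ω ∈ A} {ω | 1 ≤ ∑ i, Y i ω} - truncPoissonProb lam A|
      ≤ (1 - Real.exp (-lam) - lam * Real.exp (-lam)) / (lam * (1 - Real.exp (-lam)))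
          * (∑ i, p i ^ 2) / (1 - ∏ i, (1 - p i)) := by
  have := hindep.isProbabilityMeasure
  have hstein := abs_integral_bernoulliSum_stein_le hY hindep hY1
    (abs_truncPoissonSteinSol_sub_le hlampos hA)
  simp only [hp, ← hlam, poissonSteinSol_stein hlampos,
    integral_truncPoissonSteinRHS_comp lam A (Finset.measurable_sum _ fun i _ => hY i),
    measureReal_one_le_sum hY hindep hY1] at hstein
  have hp0 : ∀ i, 0 ≤ p i := fun i => hp i ▸ integral_nonneg fun ω => Nat.cast_nonneg _
  have hp1 : ∀ i, p i ≤ 1 := fun i => hp i ▸ (integral_mono (integrable_comp_of_le (hY i) (hY1 i) _)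
    (integrable_const 1) fun ω => Nat.cast_le_one.2 (hY1 i ω)).trans_eq (by simp)
  have hpos : 0 < 1 - ∏ i, (1 - p i) := sub_pos.2 (prod_one_sub_lt_one hp0 hp1 (hlam ▸ hlampos))
  have hsub : {ω | ∑ i, Y i ω ∈ A} ⊆ {ω | 1 ≤ ∑ i, Y i ω} := fun ω hω => hA hω
  rw [condP, Set.inter_eq_left.2 hsub, ← measureReal_def, ← measureReal_def,
    measureReal_one_le_sum hY hindep hY1]
  simp only [hp]
  rw [div_sub' hpos.ne', abs_div, abs_of_pos hpos, mul_comm _ (truncPoissonProb lam A)]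
  exact div_le_div_of_nonneg_right hstein hpos.le

end BernoulliSum

theorem stmt17_general {Ω : Type*} [MeasurableSpace Ω] (μ : Measure Ω)
    (n : ℕ) (X : Fin n → Ω → ℝ) (hmeas : ∀ i, Measurable (X i))
    (hindep : iIndepFun X μ)
    (s : ℝ) (pp : Fin n → ℝ) (hpp : ∀ i, pp i = (μ {ω | s < X i ω}).toReal)
    (lam : ℝ) (hlam : lam = ∑ i, pp i) (hlampos : 0 < lam) :
    ∀ A : Set ℕ, A ⊆ Set.Ici 1 →
      |condP μ {ω | (∑ i, if s < X i ω then 1 else 0) ∈ A}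
          {ω | 1 ≤ ∑ i, if s < X i ω then 1 else 0} -
        (∑' k : ℕ, if k ∈ A then poiPMF lam k else 0) / (1 - Real.exp (-lam))| ≤
      ((1 - Real.exp (-lam) - lam * Real.exp (-lam)) / (lam * (1 - Real.exp (-lam)))) *
        (∑ i, (pp i) ^ 2) / (1 - ∏ i, (1 - pp i)) := by
  intro A hA
  have hthreshold : Measurable fun x : ℝ => if s < x then 1 else 0 :=
    Measurable.ite measurableSet_Ioi measurable_const measurable_const
  have hp : ∀ i, ∫ ω, ((if s < X i ω then 1 else 0 : ℕ) : ℝ) ∂μ = pp i := fun i => by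
    rw [hpp i, ← measureReal_def,
      ← integral_indicator_one (measurableSet_lt measurable_const (hmeas i))]
    congr with ω
    simp [Set.indicator_apply]
  exact abs_condP_bernoulliSum_sub_truncPoissonProb_le (fun i => hthreshold.comp (hmeas i))
    (hindep.comp _ fun _ => hthreshold)
    (fun i ω => by dsimp only [Function.comp_apply]; split_ifs <;> simp) hp hlam hlampos hA

/-- For independent `X_1, …, X_n` with exceedance probabilities
`p_i = P(X_i > s) ∈ [0,1)` and `λ = Σ p_i > 0`, the conditional law of the number of
exceedances `N` given `N ≥ 1` satisfies
`d_TV(L(N^{(1)}), Pn^{(1)}(λ)) ≤ [(1 − e^{−λ} − λe^{−λ})/(λ(1 − e^{−λ}))]·Σ p_i² / (1 − Π(1 − p_i))`. -/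
theorem stmt17 {Ω : Type*} [MeasurableSpace Ω] (μ : Measure Ω) [IsProbabilityMeasure μ]
    (n : ℕ) (X : Fin n → Ω → ℝ) (hmeas : ∀ i, Measurable (X i))
    (hindep : iIndepFun X μ)
    (s : ℝ) (pp : Fin n → ℝ) (hpp : ∀ i, pp i = (μ {ω | s < X i ω}).toReal)
    (hpp0 : ∀ i, 0 ≤ pp i) (hpp1 : ∀ i, pp i < 1)
    (lam : ℝ) (hlam : lam = ∑ i, pp i) (hlampos : 0 < lam) :
    ∀ A : Set ℕ, A ⊆ Set.Ici 1 →
      |condP μ {ω | (∑ i, if s < X i ω then 1 else 0) ∈ A}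
          {ω | 1 ≤ ∑ i, if s < X i ω then 1 else 0} -
        (∑' k : ℕ, if k ∈ A then poiPMF lam k else 0) / (1 - Real.exp (-lam))| ≤
      ((1 - Real.exp (-lam) - lam * Real.exp (-lam)) / (lam * (1 - Real.exp (-lam)))) *
        (∑ i, (pp i) ^ 2) / (1 - ∏ i, (1 - pp i)) :=
  stmt17_general μ n X hmeas hindep s pp hpp lam hlam hlampos
end

section
/- Let Θ be a random variable with P(Θ = 1) = q = 1 − P(Θ = 0), 0 < q ≤ 1, and let X_1, …, X_n be conditionally independent given Θ, with P(X_i > s | Θ = 0) = 0 and P(X_i > s | Θ = 1) = p_1 ∈ (0,1) for all i. Let N = Σ_{i=1}^n 1{X_i > s} and λ = n p_1. Then d_TV( L(N^{(1)}), Pn^{(1)}(λ) ) ≤ [ (1 − e^{−λ} − λ e^{−λ}) / ( λ (1 − e^{−λ}) ) ] · n p_1² / ( 1 − (1 − p_1)^n ). -/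
/-!
Conditionally on `Θ = 1` the exceedance events are independent with probability `p₁`, and on
`Θ = 0` there are none, so `P(N ∈ A) = q · Bin(n, p₁)(A)` for every `A ⊆ {1, 2, …}`; conditioning
on `N ≥ 1` cancels `q`. What remains is a Stein's method comparison of the zero-truncated
binomial and Poisson laws. For `π = Poisson(λ)` conditioned on `{1, 2, …}`, the function
`g (j + 1) = (π(A ∩ [1, j]) - π(A) π([1, j])) / (λ π(j))` solves
`λ g (k + 1) - k g k = 1_A(k) - π(A)` for `k ≥ 1`, with `g 1 = 0`. For `W ~ Bin(n, p)` and
`W' ~ Bin(n - 1, p)` one has `E[λ g(W + 1) - W g(W)] = n p² E[g(W' + 2) - g(W' + 1)]`, and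
`|g(j + 2) - g(j + 1)| ≤ 1/λ - 1/(e^λ - 1)`, which is the factor `G_{1,2}`. After clearing
denominators this increment bound is linear in the Poisson masses of `[1, j]`, `[1, j + 1]`,
`A ∩ [1, j]`, `A ∩ [1, j + 1]` and `A`; besides the obvious monotonicity relations it only needs
`λ π[1, j] ≤ (j + 1) (π[1, j + 1] - π{1})` and `(j + 1) π[j + 2, ∞) ≤ λ π[j + 1, ∞)`, both
termwise consequences of `λ π{m} = (m + 1) π{m + 1}`.
-/

open MeasureTheory ProbabilityTheory Filter Set Topology Classical

open Finset

-- Poisson weights without the factor `e^{-λ}`, which cancels in every ratio below;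
-- `partialMassOn lam A j` and `massOn lam A` are the weights of `A ∩ [1, j]` and `A ∩ [1, ∞)`.

noncomputable def poissonWeight (lam : ℝ) (m : ℕ) : ℝ := lam ^ m / m.factorial

noncomputable def partialMassOn (lam : ℝ) (A : Set ℕ) (j : ℕ) : ℝ :=
  ∑ m ∈ range j, A.indicator (poissonWeight lam) (m + 1)

noncomputable def massOn (lam : ℝ) (A : Set ℕ) : ℝ := ∑' m, A.indicator (poissonWeight lam) (m + 1)

section PoissonWeights

variable {lam : ℝ} {A : Set ℕ}

theorem poissonWeight_nonneg (hlam : 0 ≤ lam) (m : ℕ) : 0 ≤ poissonWeight lam m := by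
  unfold poissonWeight; positivity

theorem poissonWeight_pos (hlam : 0 < lam) (m : ℕ) : 0 < poissonWeight lam m := by
  unfold poissonWeight; positivity

theorem succ_mul_poissonWeight_succ (m : ℕ) :
    (m + 1) * poissonWeight lam (m + 1) = lam * poissonWeight lam m := by
  simp only [poissonWeight, Nat.factorial_succ, Nat.cast_mul, pow_succ]
  have : (m.factorial : ℝ) ≠ 0 := by positivity
  field_simp
  push_cast
  ring

theorem hasSum_poissonWeight (lam : ℝ) : HasSum (poissonWeight lam) (Real.exp lam) := by
  rw [Real.exp_eq_exp_ℝ]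
  exact NormedSpace.expSeries_div_hasSum_exp lam

theorem summable_poissonWeight (lam : ℝ) : Summable (poissonWeight lam) :=
  (hasSum_poissonWeight lam).summable

theorem summable_indicator_poissonWeight_succ (lam : ℝ) (A : Set ℕ) :
    Summable fun m => A.indicator (poissonWeight lam) (m + 1) :=
  (summable_nat_add_iff 1).mpr ((summable_poissonWeight lam).indicator A)

theorem massOn_univ (lam : ℝ) : massOn lam univ = Real.exp lam - 1 := by
  simp only [massOn, Set.indicator_univ]
  simpa [poissonWeight] using ((hasSum_nat_add_iff' 1).mpr (hasSum_poissonWeight lam)).tsum_eq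

theorem le_massOn_univ (lam : ℝ) : lam ≤ massOn lam univ := by
  rw [massOn_univ]
  linarith [Real.add_one_le_exp lam]

theorem partialMassOn_succ (j : ℕ) :
    partialMassOn lam A (j + 1) = partialMassOn lam A j + A.indicator (poissonWeight lam) (j + 1) :=
  sum_range_succ _ _

theorem partialMassOn_nonneg (hlam : 0 ≤ lam) (j : ℕ) : 0 ≤ partialMassOn lam A j :=
  sum_nonneg fun _ _ => Set.indicator_nonneg (fun k _ => poissonWeight_nonneg hlam k) _

theorem partialMassOn_le_partialMassOn_univ (hlam : 0 ≤ lam) (j : ℕ) :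
    partialMassOn lam A j ≤ partialMassOn lam univ j :=
  sum_le_sum fun _ _ => Set.indicator_le_indicator_of_subset (Set.subset_univ A)
    (fun k => poissonWeight_nonneg hlam k) _

theorem partialMassOn_le_partialMassOn_succ (hlam : 0 ≤ lam) (j : ℕ) :
    partialMassOn lam A j ≤ partialMassOn lam A (j + 1) := by
  rw [partialMassOn_succ]
  exact le_add_of_nonneg_right (Set.indicator_nonneg (fun k _ => poissonWeight_nonneg hlam k) _)

theorem partialMassOn_succ_le (hlam : 0 ≤ lam) (j : ℕ) :
    partialMassOn lam A (j + 1) ≤ partialMassOn lam A j + poissonWeight lam (j + 1) := by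
  rw [partialMassOn_succ]
  gcongr
  exact Set.indicator_le_self' (fun k _ => poissonWeight_nonneg hlam k) _

theorem massOn_sub_partialMassOn (lam : ℝ) (A : Set ℕ) (j : ℕ) :
    massOn lam A - partialMassOn lam A j = ∑' m, A.indicator (poissonWeight lam) (m + j + 1) := by
  rw [sub_eq_iff_eq_add', massOn, partialMassOn]
  exact ((summable_indicator_poissonWeight_succ lam A).sum_add_tsum_nat_add j).symm

theorem partialMassOn_le_massOn (hlam : 0 ≤ lam) (j : ℕ) :
    partialMassOn lam A j ≤ massOn lam A := by
  rw [← sub_nonneg, massOn_sub_partialMassOn]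
  exact tsum_nonneg fun _ => Set.indicator_nonneg (fun k _ => poissonWeight_nonneg hlam k) _

theorem massOn_sub_partialMassOn_le (hlam : 0 ≤ lam) (j : ℕ) :
    massOn lam A - partialMassOn lam A j ≤ massOn lam univ - partialMassOn lam univ j := by
  rw [massOn_sub_partialMassOn, massOn_sub_partialMassOn, Set.indicator_univ]
  exact (summable_indicator_poissonWeight_succ lam A).comp_injective (add_left_injective j)
    |>.tsum_le_tsum (fun m => Set.indicator_le_self' (fun k _ => poissonWeight_nonneg hlam k) _)
    ((summable_nat_add_iff (j + 1)).mpr (summable_poissonWeight lam))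

theorem lam_mul_partialMassOn_univ_le (hlam : 0 ≤ lam) (j : ℕ) :
    lam * partialMassOn lam univ j ≤ (j + 1) * (partialMassOn lam univ (j + 1) - lam) := by
  simp only [partialMassOn, Set.indicator_univ]
  have hw1 : poissonWeight lam (0 + 1) = lam := by simp [poissonWeight]
  rw [sum_range_succ', hw1, add_sub_cancel_right, mul_sum, mul_sum]
  refine sum_le_sum fun m hm => ?_
  have hmj : (m : ℝ) + 2 ≤ j + 1 := by
    have := mem_range.mp hm
    exact_mod_cast (by omega : m + 2 ≤ j + 1)
  rw [← succ_mul_poissonWeight_succ]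
  push_cast
  linarith [mul_le_mul_of_nonneg_right hmj (poissonWeight_nonneg hlam (m + 1 + 1))]

theorem succ_mul_massOn_univ_sub_partialMassOn_le (hlam : 0 ≤ lam) (j : ℕ) :
    (j + 1) * (massOn lam univ - partialMassOn lam univ (j + 1)) ≤
      lam * (massOn lam univ - partialMassOn lam univ j) := by
  simp only [massOn_sub_partialMassOn, Set.indicator_univ, ← tsum_mul_left]
  have hs := summable_poissonWeight lam
  refine Summable.tsum_le_tsum (fun m => ?_) ?_ ?_
  · rw [show m + (j + 1) + 1 = m + j + 1 + 1 by ring, ← succ_mul_poissonWeight_succ]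
    gcongr
    · exact poissonWeight_nonneg hlam _
    · linarith
  · exact ((summable_nat_add_iff (j + 1 + 1)).mpr hs).mul_left _
  · exact ((summable_nat_add_iff (j + 1)).mpr hs).mul_left _

end PoissonWeights

noncomputable def steinSolution (lam : ℝ) (A : Set ℕ) : ℕ → ℝ
  | 0 => 0
  | j + 1 => (partialMassOn lam A j - massOn lam A / massOn lam univ * partialMassOn lam univ j) /
      (lam * poissonWeight lam j)

noncomputable def steinFactor (lam : ℝ) : ℝ := (Real.exp lam - 1 - lam) / (lam * (Real.exp lam - 1))

/-- The increment `g (j + 2) - g (j + 1)`, multiplied by `(j + 1) λ t T`, in terms of the masses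
`S, S'` of `[1, j]` and `[1, j + 1]`, `P, P'` of their intersections with `A`, `a` of `A`, `T` of
`{1, 2, …}`, and the weight `t` of `j + 1`, with `k = j + 1`; the bound is `steinFactor λ` times
the same factor. -/
theorem abs_sub_le_of_mass_bounds {lam k t S S' P P' a T : ℝ} (hlam : 0 ≤ lam) (hk : 0 ≤ k)
    (hS' : S' = S + t) (hP : 0 ≤ P) (hPS : P ≤ S) (hPP' : P ≤ P') (hP't : P' ≤ P + t)
    (haP' : P' ≤ a) (ha : a - P' ≤ T - S') (hlamT : lam ≤ T) (hkey : lam * S ≤ k * (S' - lam))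
    (htail : k * (T - S') ≤ lam * (T - S)) :
    |k * (P' * T - a * S') - lam * (P * T - a * S)| ≤ k * t * (T - lam) := by
  subst hS'
  have hE : k * lam ≤ k * (S + t) - lam * S := by linarith
  have hE0 : 0 ≤ k * (S + t) - lam * S := (mul_nonneg hk hlam).trans hE
  have hF : (k - lam) * T ≤ k * (S + t) - lam * S := by linarith
  rw [abs_le]
  constructor
  · linarith [mul_nonneg (sub_nonneg.2 (show a ≤ P' + T - (S + t) by linarith)) hE0,
      mul_nonneg (sub_nonneg.2 hPS) (sub_nonneg.2 hF),
      mul_nonneg (sub_nonneg.2 hP't) (sub_nonneg.2 hE),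
      mul_nonneg (mul_nonneg (sub_nonneg.2 hPP') hk) (sub_nonneg.2 hlamT)]
  · linarith [mul_nonneg (sub_nonneg.2 haP') hE0, mul_nonneg hP (sub_nonneg.2 hF),
      mul_nonneg (sub_nonneg.2 hPP') (sub_nonneg.2 hE),
      mul_nonneg (mul_nonneg (sub_nonneg.2 hP't) hk) (sub_nonneg.2 hlamT)]

section SteinSolution

variable {lam : ℝ} {A : Set ℕ}

theorem steinSolution_one : steinSolution lam A 1 = 0 := by
  simp [steinSolution, partialMassOn]

theorem steinSolution_spec (hlam : 0 < lam) (j : ℕ) :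
    lam * steinSolution lam A (j + 2) - (j + 1) * steinSolution lam A (j + 1) =
      A.indicator 1 (j + 1) - massOn lam A / massOn lam univ := by
  have ht := poissonWeight_pos hlam (j + 1)
  simp only [steinSolution, partialMassOn_succ, Set.indicator_univ]
  rw [← succ_mul_poissonWeight_succ j]
  simp only [Set.indicator_apply, Pi.one_apply]
  split_ifs <;> field_simp <;> ring

theorem abs_steinSolution_succ_sub_le (hlam : 0 < lam) (j : ℕ) :
    |steinSolution lam A (j + 2) - steinSolution lam A (j + 1)| ≤ steinFactor lam := by
  have ht := poissonWeight_pos hlam (j + 1)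
  have hT := hlam.trans_le (le_massOn_univ lam)
  have hk : (0 : ℝ) < j + 1 := by positivity
  have hstep : steinSolution lam A (j + 2) - steinSolution lam A (j + 1) =
      ((j + 1) * (partialMassOn lam A (j + 1) * massOn lam univ -
          massOn lam A * partialMassOn lam univ (j + 1)) -
        lam * (partialMassOn lam A j * massOn lam univ - massOn lam A * partialMassOn lam univ j)) /
      ((j + 1) * poissonWeight lam (j + 1) * lam * massOn lam univ) := by
    simp only [steinSolution]
    rw [← succ_mul_poissonWeight_succ j]
    field_simp
  have hden : 0 < (j + 1) * poissonWeight lam (j + 1) * lam * massOn lam univ := by positivity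
  rw [hstep, abs_div, abs_of_pos hden, div_le_iff₀ hden]
  calc _ ≤ (j + 1) * poissonWeight lam (j + 1) * (massOn lam univ - lam) :=
        abs_sub_le_of_mass_bounds hlam.le hk.le
          (by rw [partialMassOn_succ, Set.indicator_univ]) (partialMassOn_nonneg hlam.le j)
          (partialMassOn_le_partialMassOn_univ hlam.le j)
          (partialMassOn_le_partialMassOn_succ hlam.le j) (partialMassOn_succ_le hlam.le j)
          (partialMassOn_le_massOn hlam.le (j + 1)) (massOn_sub_partialMassOn_le hlam.le (j + 1))
          (le_massOn_univ lam) (lam_mul_partialMassOn_univ_le hlam.le j)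
          (succ_mul_massOn_univ_sub_partialMassOn_le hlam.le j)
    _ = _ := by
      rw [steinFactor, ← massOn_univ]
      field_simp

end SteinSolution

noncomputable def binomWeight (n : ℕ) (p : ℝ) (k : ℕ) : ℝ := n.choose k * p ^ k * (1 - p) ^ (n - k)

theorem binomWeight_nonneg {p : ℝ} (hp0 : 0 ≤ p) (hp1 : p ≤ 1) (n k : ℕ) :
    0 ≤ binomWeight n p k := by
  have : 0 ≤ 1 - p := sub_nonneg.2 hp1
  unfold binomWeight; positivity

theorem sum_binomWeight (n : ℕ) (p : ℝ) : ∑ k ∈ range (n + 1), binomWeight n p k = 1 := by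
  have h := (add_pow p (1 - p) n).symm
  rw [add_sub_cancel, one_pow] at h
  rw [← h]
  exact sum_congr rfl fun k _ => by rw [binomWeight]; ring

theorem binomWeight_zero (n : ℕ) (p : ℝ) : binomWeight n p 0 = (1 - p) ^ n := by
  simp [binomWeight]

theorem sum_binomWeight_succ (n : ℕ) (p : ℝ) :
    ∑ k ∈ range n, binomWeight n p (k + 1) = 1 - (1 - p) ^ n := by
  have h := sum_binomWeight n p
  rw [sum_range_succ', binomWeight_zero] at h
  linarith

theorem sum_indicator_Ici_one_binomWeight (n : ℕ) (p : ℝ) :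
    ∑ k ∈ range (n + 1), (Set.Ici 1).indicator (binomWeight n p) k = 1 - (1 - p) ^ n := by
  rw [sum_range_succ', Set.indicator_of_notMem (by simp), add_zero, ← sum_binomWeight_succ]
  exact sum_congr rfl fun k _ => Set.indicator_of_mem (by simp) _

theorem binomWeight_of_lt {n k : ℕ} (h : n < k) (p : ℝ) : binomWeight n p k = 0 := by
  simp [binomWeight, Nat.choose_eq_zero_of_lt h]

theorem succ_mul_binomWeight_succ (n k : ℕ) (p : ℝ) :
    (k + 1) * binomWeight (n + 1) p (k + 1) = (n + 1) * p * binomWeight n p k := by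
  have h : ((n + 1).choose (k + 1) * (k + 1) : ℝ) = (n + 1) * n.choose k := by
    exact_mod_cast (Nat.add_one_mul_choose_eq n k).symm
  simp only [binomWeight, Nat.add_sub_add_right]
  linear_combination p ^ (k + 1) * (1 - p) ^ (n - k) * h

theorem binomWeight_succ_succ (n k : ℕ) (p : ℝ) :
    binomWeight (n + 1) p (k + 1) = p * binomWeight n p k + (1 - p) * binomWeight n p (k + 1) := by
  simp only [binomWeight, Nat.choose_succ_succ', Nat.cast_add, Nat.add_sub_add_right]
  rcases lt_or_ge k n with hk | hk
  · rw [show n - k = n - (k + 1) + 1 by omega]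
    ring
  · rw [Nat.choose_eq_zero_of_lt (Nat.lt_succ_of_le hk), Nat.cast_zero]
    ring

theorem binomWeight_succ_zero (n : ℕ) (p : ℝ) :
    binomWeight (n + 1) p 0 = (1 - p) * binomWeight n p 0 := by
  simp [binomWeight, pow_succ, mul_comm]

theorem sum_binomWeight_mul_stein_eq (n : ℕ) (p : ℝ) (g : ℕ → ℝ) :
    ∑ k ∈ range (n + 2), binomWeight (n + 1) p k * ((n + 1) * p * g (k + 1) - k * g k) =
      (n + 1) * p ^ 2 * ∑ k ∈ range (n + 1), binomWeight n p k * (g (k + 2) - g (k + 1)) := by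
  have hsize : ∑ k ∈ range (n + 2), k * binomWeight (n + 1) p k * g k =
      (n + 1) * p * ∑ k ∈ range (n + 1), binomWeight n p k * g (k + 1) := by
    rw [sum_range_succ', mul_sum]
    simp only [Nat.cast_zero, zero_mul, add_zero, Nat.cast_add, Nat.cast_one,
      succ_mul_binomWeight_succ]
    exact sum_congr rfl fun k _ => by ring
  have hshift : ∑ k ∈ range (n + 2), binomWeight (n + 1) p k * g (k + 1) =
      p * ∑ k ∈ range (n + 1), binomWeight n p k * g (k + 2) +
        (1 - p) * ∑ k ∈ range (n + 1), binomWeight n p k * g (k + 1) := by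
    have hlast : ∑ k ∈ range (n + 2), binomWeight n p k * g (k + 1) =
        ∑ k ∈ range (n + 1), binomWeight n p k * g (k + 1) := by
      rw [sum_range_succ, binomWeight_of_lt n.lt_succ_self, zero_mul, add_zero]
    rw [← hlast, sum_range_succ', sum_range_succ' _ (n + 1), binomWeight_succ_zero]
    simp only [binomWeight_succ_succ, add_mul, sum_add_distrib, mul_add, mul_sum, mul_assoc]
    ring
  calc _ = (n + 1) * p * ∑ k ∈ range (n + 2), binomWeight (n + 1) p k * g (k + 1) -
        ∑ k ∈ range (n + 2), k * binomWeight (n + 1) p k * g k := by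
        rw [mul_sum, ← sum_sub_distrib]
        exact sum_congr rfl fun k _ => by ring
    _ = _ := by
      rw [hshift, hsize]
      simp only [mul_sub, sum_sub_distrib]
      ring

theorem abs_sum_indicator_binomWeight_sub_le (n : ℕ) {p : ℝ} (hp0 : 0 < p) (hp1 : p ≤ 1)
    {A : Set ℕ} (hA : 0 ∉ A) :
    |∑ k ∈ range (n + 2), A.indicator (binomWeight (n + 1) p) k -
        massOn ((n + 1) * p) A / massOn ((n + 1) * p) univ * (1 - (1 - p) ^ (n + 1))| ≤
      steinFactor ((n + 1) * p) * ((n + 1) * p ^ 2) := by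
  set lam : ℝ := (n + 1) * p
  have hlam : 0 < lam := by positivity
  have hstein : ∑ k ∈ range (n + 2), A.indicator (binomWeight (n + 1) p) k -
        massOn lam A / massOn lam univ * (1 - (1 - p) ^ (n + 1)) =
      ∑ k ∈ range (n + 2), binomWeight (n + 1) p k *
        (lam * steinSolution lam A (k + 1) - k * steinSolution lam A k) := by
    rw [sum_range_succ', sum_range_succ' _ (n + 1), Set.indicator_of_notMem hA, steinSolution_one,
      ← sum_binomWeight_succ, mul_sum]
    simp only [add_zero, Nat.cast_zero, zero_mul, sub_zero, mul_zero, ← sum_sub_distrib]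
    refine sum_congr rfl fun k _ => ?_
    simp only [Nat.cast_add, Nat.cast_one, steinSolution_spec hlam, Set.indicator_apply,
      Pi.one_apply]
    split_ifs <;> ring
  rw [hstein, sum_binomWeight_mul_stein_eq, abs_mul, abs_of_nonneg (by positivity), mul_comm]
  gcongr
  calc _ ≤ ∑ k ∈ range (n + 1), binomWeight n p k * steinFactor lam := by
        refine (abs_sum_le_sum_abs _ _).trans (sum_le_sum fun k _ => ?_)
        rw [abs_mul, abs_of_nonneg (binomWeight_nonneg hp0.le hp1 n k)]
        exact mul_le_mul_of_nonneg_left (abs_steinSolution_succ_sub_le hlam k)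
          (binomWeight_nonneg hp0.le hp1 n k)
    _ = steinFactor lam := by rw [← sum_mul, sum_binomWeight, one_mul]

theorem abs_div_sub_massOn_div_le (n : ℕ) {p : ℝ} (hp0 : 0 < p) (hp1 : p < 1) {A : Set ℕ}
    (hA : 0 ∉ A) :
    |(∑ k ∈ range (n + 2), A.indicator (binomWeight (n + 1) p) k) / (1 - (1 - p) ^ (n + 1)) -
        massOn ((n + 1) * p) A / massOn ((n + 1) * p) univ| ≤
      steinFactor ((n + 1) * p) * ((n + 1) * p ^ 2) / (1 - (1 - p) ^ (n + 1)) := by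
  have hden : 0 < 1 - (1 - p) ^ (n + 1) :=
    sub_pos.mpr (pow_lt_one₀ (by linarith) (by linarith) (by omega))
  rw [div_sub' hden.ne', abs_div, abs_of_pos hden, mul_comm (1 - (1 - p) ^ (n + 1))]
  exact div_le_div_of_nonneg_right (abs_sum_indicator_binomWeight_sub_le n hp0 hp1.le hA) hden.le

theorem setOf_filter_mem_eq {Ω ι : Type*} [Fintype ι] (E : ι → Set Ω) (S : Finset ι) :
    {ω | ({i | ω ∈ E i} : Finset ι) = S} = (⋂ i ∈ S, E i) ∩ ⋂ i ∈ Sᶜ, (E i)ᶜ := by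
  ext ω
  simp only [Finset.ext_iff, Finset.mem_filter, Finset.mem_univ, true_and, Set.mem_ofPred_eq,
    Set.mem_inter_iff, Set.mem_iInter, Finset.mem_compl, Set.mem_compl_iff]
  exact ⟨fun hω => ⟨fun i hi => (hω i).2 hi, fun i hi hiE => hi ((hω i).1 hiE)⟩,
    fun hω i => ⟨fun hiE => by_contra fun hi => hω.2 i hi hiE, hω.1 i⟩⟩

theorem setOf_card_filter_mem {Ω ι : Type*} [Fintype ι] (E : ι → Set Ω) (A : Set ℕ) :
    {ω | #({i | ω ∈ E i} : Finset ι) ∈ A} =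
      ⋃ S ∈ (univ.filter fun S : Finset ι => #S ∈ A), {ω | ({i | ω ∈ E i} : Finset ι) = S} := by
  ext ω
  simp

section BernoulliCount

variable {Ω ι : Type*} [MeasurableSpace Ω] {ν : Measure Ω} [IsFiniteMeasure ν]
  {E : ι → Set Ω} {q p : ℝ}

theorem measureReal_biInter_inter_biInter_compl (hE : ∀ i, MeasurableSet (E i))
    (h : ∀ S : Finset ι, ν.real (⋂ i ∈ S, E i) = q * p ^ #S) (C : Finset ι) :
    ∀ S : Finset ι, Disjoint S C →
      ν.real ((⋂ i ∈ S, E i) ∩ ⋂ i ∈ C, (E i)ᶜ) = q * p ^ #S * (1 - p) ^ #C := by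
  induction C using Finset.induction_on with
  | empty => simp [h]
  | insert j C hjC ih =>
    intro S hSC
    have hjS : j ∉ S := Finset.disjoint_right.mp hSC (mem_insert_self j C)
    have hsplit := measureReal_inter_add_sdiff (μ := ν)
      (s := (⋂ i ∈ S, E i) ∩ ⋂ i ∈ C, (E i)ᶜ) (hE j)
    have hin : (⋂ i ∈ S, E i) ∩ (⋂ i ∈ C, (E i)ᶜ) ∩ E j =
        (⋂ i ∈ insert j S, E i) ∩ ⋂ i ∈ C, (E i)ᶜ := by
      rw [set_biInter_insert]; ac_rfl
    have hout : ((⋂ i ∈ S, E i) ∩ ⋂ i ∈ C, (E i)ᶜ) \ E j =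
        (⋂ i ∈ S, E i) ∩ ⋂ i ∈ insert j C, (E i)ᶜ := by
      rw [set_biInter_insert, Set.sdiff_eq]; ac_rfl
    rw [hin, hout, ih (insert j S) (disjoint_insert_left.mpr ⟨hjC, hSC.mono_right
      (subset_insert j C)⟩), ih S (hSC.mono_right (subset_insert j C)),
      card_insert_of_notMem hjS] at hsplit
    rw [card_insert_of_notMem hjC]
    linear_combination hsplit

variable [Fintype ι]

theorem measurableSet_filter_mem_eq (hE : ∀ i, MeasurableSet (E i)) (S : Finset ι) :
    MeasurableSet {ω | ({i | ω ∈ E i} : Finset ι) = S} := by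
  rw [setOf_filter_mem_eq]
  exact (Finset.measurableSet_biInter _ fun i _ => hE i).inter
    (Finset.measurableSet_biInter _ fun i _ => (hE i).compl)

theorem measurableSet_card_filter_mem (hE : ∀ i, MeasurableSet (E i)) (A : Set ℕ) :
    MeasurableSet {ω | #({i | ω ∈ E i} : Finset ι) ∈ A} := by
  rw [setOf_card_filter_mem]
  exact Finset.measurableSet_biUnion _ fun S _ => measurableSet_filter_mem_eq hE S

theorem measureReal_filter_mem_eq (hE : ∀ i, MeasurableSet (E i))
    (h : ∀ S : Finset ι, ν.real (⋂ i ∈ S, E i) = q * p ^ #S) (S : Finset ι) :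
    ν.real {ω | ({i | ω ∈ E i} : Finset ι) = S} =
      q * p ^ #S * (1 - p) ^ (Fintype.card ι - #S) := by
  rw [setOf_filter_mem_eq, measureReal_biInter_inter_biInter_compl hE h Sᶜ S disjoint_compl_right,
    card_compl]

theorem measureReal_card_filter_mem (hE : ∀ i, MeasurableSet (E i))
    (h : ∀ S : Finset ι, ν.real (⋂ i ∈ S, E i) = q * p ^ #S) (A : Set ℕ) :
    ν.real {ω | #({i | ω ∈ E i} : Finset ι) ∈ A} =
      q * ∑ k ∈ range (Fintype.card ι + 1), A.indicator (binomWeight (Fintype.card ι) p) k := by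
  have hdisj : Set.PairwiseDisjoint ↑(univ.filter fun S : Finset ι => #S ∈ A)
      fun S => {ω | ({i | ω ∈ E i} : Finset ι) = S} :=
    fun S _ T _ hST => Set.disjoint_left.mpr fun ω hS hT => hST (hS.symm.trans hT)
  rw [setOf_card_filter_mem,
    measureReal_biUnion_finset hdisj fun S _ => measurableSet_filter_mem_eq hE S]
  simp only [measureReal_filter_mem_eq hE h, sum_filter]
  rw [← Finset.powerset_univ, sum_powerset_apply_card
    (fun m => if m ∈ A then q * p ^ m * (1 - p) ^ (Fintype.card ι - m) else 0), card_univ, mul_sum]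
  refine sum_congr rfl fun k _ => ?_
  simp only [Set.indicator_apply, binomWeight, nsmul_eq_mul]
  split_ifs <;> ring

theorem measureReal_card_filter_mem_of_null_compl {μ : Measure Ω} [IsFiniteMeasure μ] {B : Set Ω}
    (hE : ∀ i, MeasurableSet (E i)) (hB : μ (Bᶜ ∩ ⋃ i, E i) = 0)
    (h : ∀ S : Finset ι, μ.real (B ∩ ⋂ i ∈ S, E i) = q * p ^ #S) {A : Set ℕ} (hA : 0 ∉ A) :
    μ.real {ω | #({i | ω ∈ E i} : Finset ι) ∈ A} =
      q * ∑ k ∈ range (Fintype.card ι + 1), A.indicator (binomWeight (Fintype.card ι) p) k := by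
  have hnull : μ.real ({ω | #({i | ω ∈ E i} : Finset ι) ∈ A} ∩ Bᶜ) = 0 := by
    refine (measureReal_eq_zero_iff (μ := μ)).mpr (measure_mono_null ?_ hB)
    rintro ω ⟨hω, hωB⟩
    obtain ⟨i, hi⟩ := card_pos.mp (Nat.pos_of_ne_zero fun h0 => hA (h0 ▸ hω))
    exact ⟨hωB, Set.mem_iUnion.mpr ⟨i, (Finset.mem_filter.mp hi).2⟩⟩
  have hrestrict (S : Finset ι) : (μ.restrict B).real (⋂ i ∈ S, E i) = q * p ^ #S := by
    rw [measureReal_restrict_apply (Finset.measurableSet_biInter _ fun i _ => hE i),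
      Set.inter_comm, h]
  rw [← measureReal_sdiff_null' hnull, Set.sdiff_compl,
    ← measureReal_restrict_apply (measurableSet_card_filter_mem hE A),
    measureReal_card_filter_mem hE hrestrict]

theorem condP_card_filter_mem_of_null_compl {μ : Measure Ω} [IsFiniteMeasure μ] {B : Set Ω}
    (hE : ∀ i, MeasurableSet (E i)) (hB : μ (Bᶜ ∩ ⋃ i, E i) = 0)
    (h : ∀ S : Finset ι, μ.real (B ∩ ⋂ i ∈ S, E i) = q * p ^ #S) (hq : q ≠ 0) {A : Set ℕ}
    (hA : A ⊆ Set.Ici 1) :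
    condP μ {ω | #({i | ω ∈ E i} : Finset ι) ∈ A} {ω | 1 ≤ #({i | ω ∈ E i} : Finset ι)} =
      (∑ k ∈ range (Fintype.card ι + 1), A.indicator (binomWeight (Fintype.card ι) p) k) /
        (1 - (1 - p) ^ Fintype.card ι) := by
  have hA0 : 0 ∉ A := fun h0 => by simpa using hA h0
  have hsub : {ω | #({i | ω ∈ E i} : Finset ι) ∈ A} ⊆ {ω | 1 ≤ #({i | ω ∈ E i} : Finset ι)} :=
    fun ω hω => hA hω
  have hpos : {ω | 1 ≤ #({i | ω ∈ E i} : Finset ι)} =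
      {ω | #({i | ω ∈ E i} : Finset ι) ∈ Set.Ici 1} := rfl
  rw [condP, Set.inter_eq_left.mpr hsub, hpos, ← measureReal_def, ← measureReal_def,
    measureReal_card_filter_mem_of_null_compl hE hB h hA0,
    measureReal_card_filter_mem_of_null_compl hE hB h (A := Set.Ici 1) (by simp),
    sum_indicator_Ici_one_binomWeight, mul_div_mul_left _ _ hq]

end BernoulliCount

theorem tsum_ite_mem_poiPMF_div {lam : ℝ} {A : Set ℕ} (hA : 0 ∉ A) :
    (∑' k, if k ∈ A then poiPMF lam k else 0) / (1 - Real.exp (-lam)) =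
      massOn lam A / massOn lam univ := by
  have hpmf : (fun k => if k ∈ A then poiPMF lam k else 0) =
      fun k => Real.exp (-lam) * A.indicator (poissonWeight lam) k := by
    ext k
    simp only [poiPMF, poissonWeight, Set.indicator_apply, mul_div_assoc]
    split_ifs <;> simp
  have hmass : 1 - Real.exp (-lam) = Real.exp (-lam) * massOn lam univ := by
    rw [massOn_univ, mul_sub, ← Real.exp_add, neg_add_cancel, Real.exp_zero, mul_one]
  rw [hpmf, tsum_mul_left, ((summable_poissonWeight lam).indicator A).tsum_eq_zero_add,
    Set.indicator_of_notMem hA, zero_add, hmass, mul_div_mul_left _ _ (Real.exp_ne_zero _)]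
  rfl

theorem steinFactor_eq (lam : ℝ) : steinFactor lam =
    (1 - Real.exp (-lam) - lam * Real.exp (-lam)) / (lam * (1 - Real.exp (-lam))) := by
  have hmass : 1 - Real.exp (-lam) = Real.exp (-lam) * (Real.exp lam - 1) := by
    rw [mul_sub, ← Real.exp_add, neg_add_cancel, Real.exp_zero, mul_one]
  rw [steinFactor, hmass, ← mul_div_mul_left _ _ (Real.exp_ne_zero (-lam))]
  congr 1 <;> ring

theorem stmt19_general {Ω : Type*} [MeasurableSpace Ω] (μ : Measure Ω) [IsProbabilityMeasure μ]
    (n : ℕ) (hn : 1 ≤ n) (X : Fin n → Ω → ℝ) (hmeas : ∀ i, Measurable (X i))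
    (Θ : Ω → ℕ) (hΘval : ∀ ω, Θ ω = 0 ∨ Θ ω = 1)
    (q : ℝ) (hq0 : 0 < q)
    (s : ℝ) (p₁ : ℝ) (hp₁0 : 0 < p₁) (hp₁1 : p₁ < 1)
    (hcond0 : μ ({ω | Θ ω = 0} ∩ {ω | ∃ i, s < X i ω}) = 0)
    (hcond1 : ∀ S : Finset (Fin n),
      (μ ({ω | Θ ω = 1} ∩ {ω | ∀ i ∈ S, s < X i ω})).toReal = q * p₁ ^ S.card)
    (lam : ℝ) (hlam : lam = n * p₁) :
    ∀ A : Set ℕ, A ⊆ Set.Ici 1 →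
      |condP μ {ω | (∑ i, if s < X i ω then 1 else 0) ∈ A}
          {ω | 1 ≤ ∑ i, if s < X i ω then 1 else 0} -
        (∑' k : ℕ, if k ∈ A then poiPMF lam k else 0) / (1 - Real.exp (-lam))| ≤
      ((1 - Real.exp (-lam) - lam * Real.exp (-lam)) / (lam * (1 - Real.exp (-lam)))) *
        ((n : ℝ) * p₁ ^ 2) / (1 - (1 - p₁) ^ n) := by
  intro A hA
  obtain ⟨m, rfl⟩ : ∃ m, n = m + 1 := ⟨n - 1, by omega⟩
  subst hlam
  set E : Fin (m + 1) → Set Ω := fun i => {ω | s < X i ω}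
  have hE (i : Fin (m + 1)) : MeasurableSet (E i) := measurableSet_lt measurable_const (hmeas i)
  have hB : μ ({ω | Θ ω = 1}ᶜ ∩ ⋃ i, E i) = 0 := by
    refine measure_mono_null ?_ hcond0
    rintro ω ⟨hΘ, hX⟩
    exact ⟨(hΘval ω).resolve_right hΘ, by simpa [E] using hX⟩
  have hprod (S : Finset (Fin (m + 1))) :
      μ.real ({ω | Θ ω = 1} ∩ ⋂ i ∈ S, E i) = q * p₁ ^ #S := by
    rw [← hcond1 S, measureReal_def]
    congr 3
    ext ω
    simp [E]
  have hA0 : 0 ∉ A := fun h0 => by simpa using hA h0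
  have hcond : condP μ {ω | (∑ i, if s < X i ω then 1 else 0) ∈ A}
      {ω | 1 ≤ ∑ i, if s < X i ω then 1 else 0} =
        (∑ k ∈ range (m + 2), A.indicator (binomWeight (m + 1) p₁) k) /
          (1 - (1 - p₁) ^ (m + 1)) := by
    have h := condP_card_filter_mem_of_null_compl hE hB hprod hq0.ne' hA
    rw [Fintype.card_fin] at h
    simp only [← card_filter]
    exact h
  rw [hcond, tsum_ite_mem_poiPMF_div hA0, ← steinFactor_eq]
  push_cast
  exact abs_div_sub_massOn_div_le m hp₁0 hp₁1 hA0

/-- Zero-inflated exceedances: given a phase variable `Θ ∈ {0,1}` with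
`P(Θ = 1) = q ∈ (0,1]`, conditionally on `Θ = 0` no exceedance occurs, and conditionally on
`Θ = 1` the exceedance events are i.i.d. with probability `p₁` (encoded by
`P(Θ = 1, X_i > s ∀ i ∈ S) = q p₁^{|S|}` for all `S`).  With `λ = n p₁`, the number of
exceedances `N` satisfies
`d_TV(L(N^{(1)}), Pn^{(1)}(λ)) ≤ [(1 − e^{−λ} − λe^{−λ})/(λ(1 − e^{−λ}))]·n p₁²/(1 − (1 − p₁)ⁿ)`. -/
theorem stmt19 {Ω : Type*} [MeasurableSpace Ω] (μ : Measure Ω) [IsProbabilityMeasure μ]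
    (n : ℕ) (hn : 1 ≤ n) (X : Fin n → Ω → ℝ) (hmeas : ∀ i, Measurable (X i))
    (Θ : Ω → ℕ) (hΘmeas : Measurable Θ) (hΘval : ∀ ω, Θ ω = 0 ∨ Θ ω = 1)
    (q : ℝ) (hq0 : 0 < q) (hq1 : q ≤ 1) (hq : (μ {ω | Θ ω = 1}).toReal = q)
    (s : ℝ) (p₁ : ℝ) (hp₁0 : 0 < p₁) (hp₁1 : p₁ < 1)
    (hcond0 : μ ({ω | Θ ω = 0} ∩ {ω | ∃ i, s < X i ω}) = 0)
    (hcond1 : ∀ S : Finset (Fin n),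
      (μ ({ω | Θ ω = 1} ∩ {ω | ∀ i ∈ S, s < X i ω})).toReal = q * p₁ ^ S.card)
    (lam : ℝ) (hlam : lam = n * p₁) :
    ∀ A : Set ℕ, A ⊆ Set.Ici 1 →
      |condP μ {ω | (∑ i, if s < X i ω then 1 else 0) ∈ A}
          {ω | 1 ≤ ∑ i, if s < X i ω then 1 else 0} -
        (∑' k : ℕ, if k ∈ A then poiPMF lam k else 0) / (1 - Real.exp (-lam))| ≤
      ((1 - Real.exp (-lam) - lam * Real.exp (-lam)) / (lam * (1 - Real.exp (-lam)))) *
        ((n : ℝ) * p₁ ^ 2) / (1 - (1 - p₁) ^ n) :=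
  stmt19_general μ n hn X hmeas Θ hΘval q hq0 s p₁ hp₁0 hp₁1 hcond0 hcond1 lam hlam
end
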